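/- arXiv:1509.09272 — 7 statements merged into one kernel-verified Lean document; each statement's English description precedes it below -/
import Mathlib

section
/- If u ∈ C³([0,L]) satisfies u''' + a u' + u u' = 0 on [0,L] with u(0) = u(L) = u'(L) = 0, then u'(0) = 0. -/
open Set

/-!
Multiplying the equation by `u` makes it exact: `u (u''' + a u' + u u')` is the derivative of
`F = u u'' - u'² / 2 + a u² / 2 + u³ / 3`. Hence `F` is constant on `[0, L]`, and the boundary
conditions give `0 = F L = F 0 = -u'(0)² / 2`.
-/

noncomputable def kdvFirstIntegral (a : ℝ) (u : ℝ → ℝ) (x : ℝ) : ℝ :=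
  u x * deriv (deriv u) x - deriv u x ^ 2 / 2 + a * u x ^ 2 / 2 + u x ^ 3 / 3

theorem hasDerivAt_kdvFirstIntegral {a x : ℝ} {u : ℝ → ℝ} (hu : DifferentiableAt ℝ u x)
    (hu' : DifferentiableAt ℝ (deriv u) x) (hu'' : DifferentiableAt ℝ (deriv (deriv u)) x) :
    HasDerivAt (kdvFirstIntegral a u)
      (u x * (deriv (deriv (deriv u)) x + a * deriv u x + u x * deriv u x)) x := by
  have h := (((hu.hasDerivAt.mul hu''.hasDerivAt).sub ((hu'.hasDerivAt.pow 2).div_const 2)).add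
    ((hu.hasDerivAt.pow 2).const_mul a |>.div_const 2)).add ((hu.hasDerivAt.pow 3).div_const 3)
  exact h.congr_deriv (by norm_num; ring)

theorem kdvFirstIntegral_eq_of_stationary {a b c : ℝ} {u : ℝ → ℝ} (hbc : b ≤ c)
    (hu : ContDiff ℝ 3 u)
    (heq : ∀ x ∈ Icc b c,
      deriv (deriv (deriv u)) x + a * deriv u x + u x * deriv u x = 0) :
    kdvFirstIntegral a u c = kdvFirstIntegral a u b := by
  have hderiv x : HasDerivAt (kdvFirstIntegral a u)
      (u x * (deriv (deriv (deriv u)) x + a * deriv u x + u x * deriv u x)) x :=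
    hasDerivAt_kdvFirstIntegral (hu.differentiable (by norm_num) x)
      ((ContDiff.iterate_deriv' 2 1 hu).differentiable (by norm_num) x)
      ((ContDiff.iterate_deriv' 1 2 hu).differentiable (by norm_num) x)
  refine constant_of_has_deriv_right_zero
    (fun x _ => (hderiv x).continuousAt.continuousWithinAt) (fun x hx => ?_) c ⟨hbc, le_rfl⟩
  simpa [heq x (Ico_subset_Icc_self hx)] using (hderiv x).hasDerivWithinAt

/-- If `u ∈ C³` satisfies `u''' + a u' + u u' = 0` on `[0,L]` with
`u(0) = u(L) = u'(L) = 0`, then `u'(0) = 0`. -/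
theorem deriv_zero_at_left (a L : ℝ) (hL : 0 < L) (u : ℝ → ℝ)
    (hu : ContDiff ℝ 3 u)
    (heq : ∀ x ∈ Icc (0:ℝ) L,
      deriv (deriv (deriv u)) x + a * deriv u x + u x * deriv u x = 0)
    (h0 : u 0 = 0) (hL0 : u L = 0) (hL1 : deriv u L = 0) :
    deriv u 0 = 0 := by
  have hF := kdvFirstIntegral_eq_of_stationary hL.le hu heq
  simp only [kdvFirstIntegral, h0, hL0, hL1] at hF
  nlinarith [sq_nonneg (deriv u 0)]
end

section
/- Any C³ solution u of u''' + a u' + u u' = 0 on ℝ with u(0) = u'(0) = u(L) = u'(L) = 0 extends to (equals) an L-periodic function, i.e. u(x + L) = u(x) for all x. -/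
/-!
The quantity `u'' + a u + u² / 2` is a first integral of the equation, so together with
`u(0) = u(L) = 0` it forces `u''(L) = u''(0)`. Hence the phase curves `t ↦ (u, u', u'')(t)` and
`t ↦ (u, u', u'')(t + L)` of the equivalent first-order autonomous system, whose vector field is
polynomial and so locally Lipschitz, agree at `t = 0`; by uniqueness of solutions they coincide.
-/

open Set

theorem eq_of_hasDerivAt_of_locallyLipschitz {E : Type*} [NormedAddCommGroup E]
    [NormedSpace ℝ E] {F : E → E} (hF : LocallyLipschitz F) {f g : ℝ → E}
    (hf : ∀ t, HasDerivAt f (F (f t)) t) (hg : ∀ t, HasDerivAt g (F (g t)) t) {t₀ : ℝ}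
    (h : f t₀ = g t₀) : f = g := by
  have hfc : Continuous f := continuous_iff_continuousAt.2 fun t => (hf t).continuousAt
  have hgc : Continuous g := continuous_iff_continuousAt.2 fun t => (hg t).continuousAt
  suffices {t | f t = g t} = univ from funext (eq_univ_iff_forall.1 this)
  refine IsClopen.eq_univ ⟨isClosed_eq hfc hgc, isOpen_iff_mem_nhds.2 fun t ht => ?_⟩ ⟨t₀, h⟩
  obtain ⟨K, s, hs, hK⟩ := hF (f t)
  refine ODE_solution_unique_of_eventually (v := fun _ => F) (s := fun _ => s)
    (.of_forall fun _ => hK) ?_ ?_ ht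
  · filter_upwards [hfc.continuousAt.preimage_mem_nhds hs] with t' ht' using ⟨hf t', ht'⟩
  · filter_upwards [hgc.continuousAt.preimage_mem_nhds (ht ▸ hs)] with t' ht' using ⟨hg t', ht'⟩

/-- The equation `u''' = -(a + u) u'` as a first-order system in the variables `(u, u', u'')`. -/
def phaseField (a : ℝ) (p : ℝ × ℝ × ℝ) : ℝ × ℝ × ℝ :=
  (p.2.1, p.2.2, -(a + p.1) * p.2.1)

theorem contDiff_phaseField (a : ℝ) : ContDiff ℝ 1 (phaseField a) := by
  unfold phaseField
  fun_prop

noncomputable def phaseCurve (u : ℝ → ℝ) (t : ℝ) : ℝ × ℝ × ℝ :=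
  (u t, deriv u t, deriv (deriv u) t)

theorem differentiable_deriv_deriv_of_contDiff_three {u : ℝ → ℝ} (hu : ContDiff ℝ 3 u) :
    Differentiable ℝ u ∧ Differentiable ℝ (deriv u) ∧ Differentiable ℝ (deriv (deriv u)) :=
  ⟨hu.differentiable (by norm_num), (hu.iterate_deriv' 2 1).differentiable (by norm_num),
    (hu.iterate_deriv' 1 2).differentiable (by norm_num)⟩

section

variable {a : ℝ} {u : ℝ → ℝ}

theorem energy_eq (hu : ContDiff ℝ 3 u)
    (heq : ∀ x, deriv (deriv (deriv u)) x + a * deriv u x + u x * deriv u x = 0) (x y : ℝ) :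
    deriv (deriv u) x + a * u x + u x ^ 2 / 2 = deriv (deriv u) y + a * u y + u y ^ 2 / 2 := by
  obtain ⟨hd₀, -, hd₂⟩ := differentiable_deriv_deriv_of_contDiff_three hu
  have hE : ∀ t, HasDerivAt (fun t => deriv (deriv u) t + a * u t + u t ^ 2 / 2) 0 t := by
    intro t
    have h := ((hd₂ t).hasDerivAt.fun_add ((hd₀ t).hasDerivAt.const_mul a)).fun_add
      (((hd₀ t).hasDerivAt.pow 2).div_const 2)
    refine h.congr_deriv ?_
    push_cast
    linear_combination heq t
  exact is_const_of_deriv_eq_zero (fun t => (hE t).differentiableAt) (fun t => (hE t).deriv) x y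

theorem hasDerivAt_phaseCurve (hu : ContDiff ℝ 3 u)
    (heq : ∀ x, deriv (deriv (deriv u)) x + a * deriv u x + u x * deriv u x = 0) (t : ℝ) :
    HasDerivAt (phaseCurve u) (phaseField a (phaseCurve u t)) t := by
  obtain ⟨hd₀, hd₁, hd₂⟩ := differentiable_deriv_deriv_of_contDiff_three hu
  have hu₃ : deriv (deriv (deriv u)) t = -(a + u t) * deriv u t := by
    linear_combination heq t
  exact (hd₀ t).hasDerivAt.prodMk ((hd₁ t).hasDerivAt.prodMk (hu₃ ▸ (hd₂ t).hasDerivAt))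

end

theorem solution_periodic_general (a L : ℝ) (u : ℝ → ℝ)
    (hu : ContDiff ℝ 3 u)
    (heq : ∀ x : ℝ,
      deriv (deriv (deriv u)) x + a * deriv u x + u x * deriv u x = 0)
    (h0 : u 0 = 0) (h0' : deriv u 0 = 0) (hL0 : u L = 0) (hL1 : deriv u L = 0) :
    ∀ x : ℝ, u (x + L) = u x := by
  have huL₂ : deriv (deriv u) L = deriv (deriv u) 0 := by
    simpa [h0, hL0] using energy_eq hu heq L 0
  have hshift : phaseCurve u = fun t => phaseCurve u (t + L) :=
    eq_of_hasDerivAt_of_locallyLipschitz (contDiff_phaseField a).locallyLipschitz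
      (hasDerivAt_phaseCurve hu heq)
      (fun t => (hasDerivAt_phaseCurve hu heq (t + L)).comp_add_const t L) (t₀ := 0)
      (by simp [phaseCurve, h0, h0', hL0, hL1, huL₂])
  exact fun x => (congrArg Prod.fst (congrFun hshift x)).symm

/-- Any `C³` solution of `u''' + a u' + u u' = 0` on `ℝ` with
`u(0) = u'(0) = u(L) = u'(L) = 0` is `L`-periodic. -/
theorem solution_periodic (a L : ℝ) (hL : 0 < L) (u : ℝ → ℝ)
    (hu : ContDiff ℝ 3 u)
    (heq : ∀ x : ℝ,
      deriv (deriv (deriv u)) x + a * deriv u x + u x * deriv u x = 0)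
    (h0 : u 0 = 0) (h0' : deriv u 0 = 0) (hL0 : u L = 0) (hL1 : deriv u L = 0) :
    ∀ x : ℝ, u (x + L) = u x :=
  solution_periodic_general a L u hu heq h0 h0' hL0 hL1
end

section
/- Suppose F is smooth with F(0) = 0, F'(0) < 0, and there exists y₀ > 0 with F(y₀) = 0, F'(y₀) ≠ 0, and F(y) < 0 for all y ∈ (0, y₀). Then the solution y of y'' + F'(y) = 0, y(-1) = y'(-1) = 0 satisfies: y is even about x = 0 after translation, y(0) = y₀ is its maximum, y'(x) > 0 on (-1,0), y'(x) < 0 on (0,1), and y(1) = 0, provided ∫₀^{y₀} dy/√(-2F(y)) = 1. -/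
open Set MeasureTheory Topology Filter

lemma ode2_unique (F : ℝ → ℝ) (hF : ContDiff ℝ (⊤ : ℕ∞) F) (u v : ℝ → ℝ)
    (hu : ContDiff ℝ 2 u) (hv : ContDiff ℝ 2 v)
    (hue : ∀ x, deriv (deriv u) x = -deriv F (u x))
    (hve : ∀ x, deriv (deriv v) x = -deriv F (v x))
    (t₀ : ℝ) (h0 : u t₀ = v t₀) (h0' : deriv u t₀ = deriv v t₀) :
    ∀ x, u x = v x := by
  have hFinf : ContDiff ℝ ((⊤:ℕ∞) : WithTop ℕ∞) F := hF.of_le (by simp)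
  have hF' : ContDiff ℝ ((⊤:ℕ∞) : WithTop ℕ∞) (deriv F) := (contDiff_infty_iff_deriv.mp hFinf).2
  set vf : ℝ × ℝ → ℝ × ℝ := fun p => (p.2, -deriv F p.1) with hvf
  have hvfC : ContDiff ℝ ((⊤:ℕ∞) : WithTop ℕ∞) vf :=
    ContDiff.prodMk contDiff_snd ((hF'.comp contDiff_fst).neg)
  intro x
  -- interval
  set a : ℝ := min x t₀ - 1
  set b : ℝ := max x t₀ + 1
  have hab : t₀ ∈ Ioo a b :=
    ⟨by simp only [a]; have := min_le_right x t₀; linarith,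
     by simp only [b]; have := le_max_right x t₀; linarith⟩
  have hxab : x ∈ Icc a b :=
    ⟨by simp only [a]; have := min_le_left x t₀; linarith,
     by simp only [b]; have := le_max_left x t₀; linarith⟩
  set U : ℝ → ℝ × ℝ := fun t => (u t, deriv u t) with hU
  set V : ℝ → ℝ × ℝ := fun t => (v t, deriv v t) with hV
  have hud : Differentiable ℝ u := hu.differentiable (by norm_num)
  have hvd : Differentiable ℝ v := hv.differentiable (by norm_num)
  have hud' : Differentiable ℝ (deriv u) := ((contDiff_succ_iff_deriv.mp (show ContDiff ℝ (1+1) u from hu)).2.2).differentiable one_ne_zero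
  have hvd' : Differentiable ℝ (deriv v) := ((contDiff_succ_iff_deriv.mp (show ContDiff ℝ (1+1) v from hv)).2.2).differentiable one_ne_zero
  have hUd : ∀ t, HasDerivAt U (vf (U t)) t := by
    intro t
    have h1 : HasDerivAt u (deriv u t) t := (hud t).hasDerivAt
    have h2 : HasDerivAt (deriv u) (-deriv F (u t)) t := by
      have := (hud' t).hasDerivAt
      rwa [hue t] at this
    exact h1.prodMk h2
  have hVd : ∀ t, HasDerivAt V (vf (V t)) t := by
    intro t
    have h1 : HasDerivAt v (deriv v t) t := (hvd t).hasDerivAt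
    have h2 : HasDerivAt (deriv v) (-deriv F (v t)) t := by
      have := (hvd' t).hasDerivAt
      rwa [hve t] at this
    exact h1.prodMk h2
  -- bound on trajectories
  have hUc : ContinuousOn U (Icc a b) := fun t _ => ((hUd t).continuousAt).continuousWithinAt
  have hVc : ContinuousOn V (Icc a b) := fun t _ => ((hVd t).continuousAt).continuousWithinAt
  obtain ⟨Mu, hMu⟩ := (isCompact_Icc (a := a) (b := b)).exists_bound_of_continuousOn hUc
  obtain ⟨Mv, hMv⟩ := (isCompact_Icc (a := a) (b := b)).exists_bound_of_continuousOn hVc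
  set M : ℝ := max Mu Mv
  set s : Set (ℝ × ℝ) := Metric.closedBall 0 (max M 0)
  have hsU : ∀ t ∈ Icc a b, U t ∈ s := by
    intro t ht
    simp only [s, Metric.mem_closedBall, dist_zero_right]
    exact le_trans (hMu t ht) (le_trans (le_max_left _ _) (le_max_left _ _))
  have hsV : ∀ t ∈ Icc a b, V t ∈ s := by
    intro t ht
    simp only [s, Metric.mem_closedBall, dist_zero_right]
    exact le_trans (hMv t ht) (le_trans (le_max_right _ _) (le_max_left _ _))
  -- Lipschitz bound
  have hfderiv : Continuous (fun p => fderiv ℝ vf p) := (hvfC.fderiv_right (m := ((⊤:ℕ∞) : WithTop ℕ∞)) (by simp)).continuous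
  obtain ⟨C, hC⟩ := (isCompact_closedBall (0 : ℝ × ℝ) (max M 0)).exists_bound_of_continuousOn
    (hfderiv.continuousOn)
  have hlip : LipschitzOnWith (Real.toNNReal C) vf s := by
    apply Convex.lipschitzOnWith_of_nnnorm_hasFDerivWithin_le
      (f' := fun p => fderiv ℝ vf p)
      (fun p _ => ((hvfC.differentiable (by simp)) p).hasFDerivAt.hasFDerivWithinAt)
      (fun p hp => ?_) (convex_closedBall _ _)
    rw [← NNReal.coe_le_coe, Real.coe_toNNReal', coe_nnnorm]
    exact le_max_of_le_left (hC p hp)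
  have := ODE_solution_unique_of_mem_Icc (v := fun _ => vf) (s := fun _ => s)
    (fun _ _ => hlip) hab hUc (fun t _ => hUd t) (fun t ht => hsU t (Ioo_subset_Icc_self ht))
    hVc (fun t _ => hVd t) (fun t ht => hsV t (Ioo_subset_Icc_self ht))
    (by simp [hU, hV, h0, h0'])
  have h2 := congrArg Prod.fst (this hxab)
  simpa [hU, hV] using h2


/-- Qualitative description of the solution of `y'' + F'(y) = 0`, `y(-1) = 0`, `y'(-1) = 0`,
under the hypotheses of the key lemma, assuming the time-of-flight integral equals 1. -/
theorem solution_shape (F y : ℝ → ℝ) (y₀ : ℝ)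
    (hF : ContDiff ℝ (⊤ : ℕ∞) F) (hF0 : F 0 = 0) (hF0' : deriv F 0 < 0)
    (hy₀ : 0 < y₀) (hFy₀ : F y₀ = 0) (hFy₀' : deriv F y₀ ≠ 0)
    (hFneg : ∀ s ∈ Ioo (0:ℝ) y₀, F s < 0)
    (hint : (∫ s in Ioo (0:ℝ) y₀, 1 / Real.sqrt (-2 * F s)) = 1)
    (hy : ContDiff ℝ 2 y)
    (heq : ∀ x : ℝ, deriv (deriv y) x + deriv F (y x) = 0)
    (hinit : y (-1) = 0) (hinit' : deriv y (-1) = 0) :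
    (∀ x : ℝ, y (-x) = y x) ∧
    y 0 = y₀ ∧
    (∀ x : ℝ, y x ≤ y 0) ∧
    (∀ x ∈ Ioo (-1:ℝ) 0, 0 < deriv y x) ∧
    (∀ x ∈ Ioo (0:ℝ) 1, deriv y x < 0) ∧
    y 1 = 0 := by
  -- basic regularity
  have hyd : Differentiable ℝ y := hy.differentiable two_ne_zero
  have hy1 : ContDiff ℝ 1 (deriv y) :=
    (contDiff_succ_iff_deriv.mp (show ContDiff ℝ (1+1) y from hy)).2.2
  have hyd' : Differentiable ℝ (deriv y) := hy1.differentiable one_ne_zero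
  have hyc : Continuous y := hyd.continuous
  have hyc' : Continuous (deriv y) := hyd'.continuous
  have hyc'' : Continuous (deriv (deriv y)) := (contDiff_one_iff_deriv.mp hy1).2
  have hFd : Differentiable ℝ F := hF.differentiable (by simp)
  have hFc : Continuous F := hFd.continuous
  have hFinf : ContDiff ℝ ((⊤:ℕ∞) : WithTop ℕ∞) F := hF.of_le (by simp)
  have hFc' : Continuous (deriv F) :=
    ((contDiff_infty_iff_deriv.mp hFinf).2).continuous
  have hye : ∀ x, deriv (deriv y) x = -deriv F (y x) := fun x => by linarith [heq x]
  -- energy conservation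
  have energy : ∀ x, (deriv y x)^2 = -2 * F (y x) := by
    have hE : ∀ x, HasDerivAt (fun t => (deriv y t)^2 + 2 * F (y t)) 0 x := by
      intro x
      have h1 : HasDerivAt (fun t => (deriv y t)^2)
          ((2:ℕ) * (deriv y x)^1 * deriv (deriv y) x) x := ((hyd' x).hasDerivAt).pow 2
      have hc : HasDerivAt (fun t => F (y t)) (deriv F (y x) * deriv y x) x :=
        (hFd (y x)).hasDerivAt.comp x (hyd x).hasDerivAt
      have h2 : HasDerivAt (fun t => 2 * F (y t)) (2 * (deriv F (y x) * deriv y x)) x :=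
        hc.const_mul 2
      have h3 := h1.add h2
      refine h3.congr_deriv ?_
      rw [hye x]
      push_cast
      ring
    have hconst := is_const_of_deriv_eq_zero
      (f := fun t => (deriv y t)^2 + 2 * F (y t))
      (fun x => (hE x).differentiableAt) (fun x => (hE x).deriv)
    intro x
    have h := hconst x (-1)
    rw [hinit, hinit', hF0] at h
    nlinarith [h]
  have hsqrt : ∀ t, 0 < deriv y t → deriv y t = Real.sqrt (-2 * F (y t)) := by
    intro t ht
    rw [← energy t, Real.sqrt_sq ht.le]
  -- the integrand
  set f : ℝ → ℝ := fun s => 1 / Real.sqrt (-2 * F s) with hf_def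
  have hf_nonneg : ∀ s, 0 ≤ f s := fun s => by positivity
  have hf_int : IntegrableOn f (Ioo 0 y₀) := by
    by_contra h
    rw [integral_undef h] at hint
    norm_num at hint
  have hf_cont : ContinuousOn f (Ioo 0 y₀) := by
    intro s hs
    have h1 : (0:ℝ) < -2 * F s := by nlinarith [hFneg s hs]
    have h2 : Real.sqrt (-2 * F s) ≠ 0 := by positivity
    exact (ContinuousAt.div continuousAt_const
      ((Real.continuous_sqrt.continuousAt).comp
        ((continuous_const.mul hFc).continuousAt)) h2).continuousWithinAt
  -- the set of "good" times
  set S : Set ℝ := {x | -1 < x ∧ ∀ t ∈ Ioc (-1:ℝ) x, 0 < deriv y t} with hS_def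
  have hy''₁ : 0 < deriv (deriv y) (-1) := by
    have := heq (-1); rw [hinit] at this; linarith
  have hstart : ∃ ε > 0, (-1 + ε) ∈ S := by
    have hev : {t | 0 < deriv (deriv y) t} ∈ 𝓝 (-1:ℝ) :=
      hyc''.continuousAt (x := -1) (Ioi_mem_nhds hy''₁)
    obtain ⟨δ, hδ, hball⟩ := Metric.mem_nhds_iff.mp hev
    refine ⟨δ/2, by positivity, ⟨by linarith, ?_⟩⟩
    intro t ht
    have hmono : StrictMonoOn (deriv y) (Icc (-1) (-1+δ/2)) := by
      apply strictMonoOn_of_deriv_pos (convex_Icc _ _) hyc'.continuousOn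
      intro u hu
      rw [interior_Icc] at hu
      exact hball (by rw [Metric.mem_ball, Real.dist_eq, abs_lt]; constructor <;>
        [linarith [hu.1]; linarith [hu.2]])
    have := hmono ⟨le_rfl, by linarith⟩ ⟨ht.1.le, ht.2⟩ ht.1
    rwa [hinit'] at this
  have hSmono : ∀ x ∈ S, StrictMonoOn y (Icc (-1) x) := by
    intro x hx
    apply strictMonoOn_of_deriv_pos (convex_Icc _ _) hyc.continuousOn
    intro u hu; rw [interior_Icc] at hu; exact hx.2 u ⟨hu.1, hu.2.le⟩
  have hSypos : ∀ x ∈ S, ∀ t ∈ Ioc (-1:ℝ) x, 0 < y t := by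
    intro x hx t ht
    have := hSmono x hx ⟨le_rfl, by linarith [hx.1]⟩ ⟨ht.1.le, ht.2⟩ ht.1
    rwa [hinit] at this
  have hSnoy₀ : ∀ x ∈ S, ∀ t ∈ Ioc (-1:ℝ) x, y t ≠ y₀ := by
    intro x hx t ht h
    have h1 := energy t
    rw [h, hFy₀] at h1
    have := hx.2 t ht
    nlinarith
  have hSylt : ∀ x ∈ S, y x < y₀ := by
    intro x hx
    by_contra h
    push_neg at h
    rcases eq_or_lt_of_le h with h | h
    · exact hSnoy₀ x hx x ⟨hx.1, le_rfl⟩ h.symm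
    · obtain ⟨t, ht, hyt⟩ := intermediate_value_Icc (by linarith [hx.1] : (-1:ℝ) ≤ x)
        hyc.continuousOn ⟨by rw [hinit]; exact hy₀.le, h.le⟩
      have ht1 : t ≠ -1 := by intro he; rw [he, hinit] at hyt; linarith
      exact hSnoy₀ x hx t ⟨lt_of_le_of_ne ht.1 (Ne.symm ht1), ht.2⟩ hyt
  have hSyIoo : ∀ x ∈ S, ∀ t ∈ Ioc (-1:ℝ) x, y t ∈ Ioo 0 y₀ := by
    intro x hx t ht
    refine ⟨hSypos x hx t ht, ?_⟩
    have hle : y t ≤ y x := by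
      rcases eq_or_lt_of_le ht.2 with he | hlt
      · rw [he]
      · exact (hSmono x hx ⟨ht.1.le, ht.2⟩ ⟨by linarith [hx.1], le_rfl⟩ hlt).le
    exact lt_of_le_of_lt hle (hSylt x hx)
  -- the primitive of f
  set Q : ℝ → ℝ := fun c => ∫ s in Ioc (0:ℝ) c, f s with hQ_def
  have hint' : Q y₀ = 1 := by
    rw [hQ_def]; simp only [integral_Ioc_eq_integral_Ioo]; exact hint
  have hf_int' : IntegrableOn f (Icc 0 y₀) := by
    rw [integrableOn_Icc_iff_integrableOn_Ioo]; exact hf_int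
  have hQcont : ContinuousOn Q (Icc 0 y₀) := intervalIntegral.continuousOn_primitive hf_int'
  have hQ0 : Q 0 = 0 := by simp [hQ_def]
  have hQdiff : ∀ c ∈ Icc (0:ℝ) y₀, ∀ d ∈ Icc (0:ℝ) y₀, c ≤ d →
      (∫ s in Ioo c d, f s) = Q d - Q c := by
    intro c hc d hd hcd
    rw [← integral_Ioc_eq_integral_Ioo]
    have hu : Ioc (0:ℝ) d = Ioc 0 c ∪ Ioc c d := (Ioc_union_Ioc_eq_Ioc hc.1 hcd).symm
    rw [hQ_def]
    simp only
    rw [hu, setIntegral_union (Ioc_disjoint_Ioc_of_le le_rfl) measurableSet_Ioc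
      (hf_int'.mono_set (Ioc_subset_Icc_self.trans (Icc_subset_Icc le_rfl hc.2)))
      (hf_int'.mono_set ((Ioc_subset_Ioc hc.1 hd.2).trans Ioc_subset_Icc_self))]
    ring
  -- change of variables: time of flight
  have hsub : ∀ x ∈ S, x + 1 = Q (y x) := by
    intro x hx
    have hyxIoo : y x ∈ Ioo 0 y₀ := hSyIoo x hx x ⟨hx.1, le_rfl⟩
    have key : ∀ a ∈ Ioo (-1:ℝ) x, Q (y x) - Q (y a) = x - a := by
      intro a ha
      have hax : a ≤ x := ha.2.le
      have hder : ∀ t ∈ uIcc a x, HasDerivAt y (deriv y t) t := fun t _ => (hyd t).hasDerivAt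
      have hcontd : ContinuousOn (deriv y) (uIcc a x) := hyc'.continuousOn
      have himg : ContinuousOn f (y '' uIcc a x) := by
        apply hf_cont.mono
        rintro u ⟨t, ht, rfl⟩
        rw [uIcc_of_le hax] at ht
        exact hSyIoo x hx t ⟨lt_of_lt_of_le ha.1 ht.1, ht.2⟩
      have hcv := intervalIntegral.integral_comp_smul_deriv' hder hcontd himg
      have hone : EqOn (fun t => deriv y t • (f ∘ y) t) (fun _ => (1:ℝ)) (uIcc a x) := by
        intro t ht
        rw [uIcc_of_le hax] at ht
        have htS : t ∈ Ioc (-1:ℝ) x := ⟨lt_of_lt_of_le ha.1 ht.1, ht.2⟩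
        have hpos := hx.2 t htS
        have hsq : Real.sqrt (-2 * F (y t)) = deriv y t := (hsqrt t hpos).symm
        simp only [Function.comp, smul_eq_mul, hf_def]
        rw [hsq, mul_one_div, div_self hpos.ne']
      have hL : (∫ t in a..x, deriv y t • (f ∘ y) t) = x - a := by
        rw [intervalIntegral.integral_congr hone]
        simp
      have hyaIoo : y a ∈ Ioo 0 y₀ := hSyIoo x hx a ⟨ha.1, hax⟩
      have hyay : y a ≤ y x := by
        rcases eq_or_lt_of_le hax with he | hlt
        · rw [he]
        · exact (hSmono x hx ⟨ha.1.le, hax⟩ ⟨by linarith [hx.1], le_rfl⟩ hlt).le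
      have hR : (∫ u in (y a)..(y x), f u) = Q (y x) - Q (y a) := by
        rw [intervalIntegral.integral_of_le hyay, integral_Ioc_eq_integral_Ioo,
          hQdiff (y a) ⟨hyaIoo.1.le, hyaIoo.2.le⟩ (y x) ⟨hyxIoo.1.le, hyxIoo.2.le⟩ hyay]
      rw [hL] at hcv
      rw [hR] at hcv
      linarith
    have hevIoo : Ioo (-1:ℝ) x ∈ 𝓝[>] (-1:ℝ) := Ioo_mem_nhdsGT_of_mem ⟨le_rfl, hx.1⟩
    have ht1 : Tendsto (fun a : ℝ => x - a) (𝓝[>] (-1:ℝ)) (𝓝 (x + 1)) := by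
      have h : Tendsto (fun a : ℝ => x - a) (𝓝 (-1:ℝ)) (𝓝 (x - (-1))) :=
        tendsto_const_nhds.sub tendsto_id
      rw [sub_neg_eq_add] at h
      exact h.mono_left nhdsWithin_le_nhds
    have ht2 : Tendsto (fun a => Q (y x) - Q (y a)) (𝓝[>] (-1:ℝ)) (𝓝 (Q (y x) - 0)) := by
      apply Tendsto.const_sub
      have hy_t : Tendsto y (𝓝[>] (-1:ℝ)) (𝓝[Icc 0 y₀] 0) := by
        rw [tendsto_nhdsWithin_iff]
        constructor
        · have h := (hyc.tendsto (-1)).mono_left (nhdsWithin_le_nhds (s := Ioi (-1:ℝ)))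
          rwa [hinit] at h
        · filter_upwards [hevIoo] with a ha
          have := hSyIoo x hx a ⟨ha.1, ha.2.le⟩
          exact ⟨this.1.le, this.2.le⟩
      have h := (hQcont 0 ⟨le_rfl, hy₀.le⟩).tendsto.comp hy_t
      rwa [hQ0] at h
    have heq2 : (fun a : ℝ => x - a) =ᶠ[𝓝[>] (-1:ℝ)] fun a => Q (y x) - Q (y a) := by
      filter_upwards [hevIoo] with a ha
      exact (key a ha).symm
    have := tendsto_nhds_unique (Filter.Tendsto.congr' heq2 ht1) ht2
    linarith
  have hS_le0 : ∀ x ∈ S, x ≤ 0 := by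
    intro x hx
    have h1 := hsub x hx
    have hyx := hSyIoo x hx x ⟨hx.1, le_rfl⟩
    have h2 : Q (y x) ≤ Q y₀ := by
      rw [hQ_def]
      simp only
      apply setIntegral_mono_set (hf_int'.mono_set Ioc_subset_Icc_self)
        (Filter.Eventually.of_forall hf_nonneg)
        (HasSubset.Subset.eventuallyLE (Ioc_subset_Ioc le_rfl hyx.2.le))
    rw [hint'] at h2
    linarith
  -- the supremum
  obtain ⟨ε, hε, hεS⟩ := hstart
  have hSne : S.Nonempty := ⟨-1 + ε, hεS⟩
  have hSbdd : BddAbove S := ⟨0, fun x hx => hS_le0 x hx⟩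
  set b : ℝ := sSup S with hb_def
  have hb_ge : -1 + ε ≤ b := le_csSup hSbdd hεS
  have hb_gt : -1 < b := by linarith
  have hb_le0 : b ≤ 0 := csSup_le hSne hS_le0
  have hbpos : ∀ t ∈ Ioo (-1:ℝ) b, 0 < deriv y t := by
    intro t ht
    obtain ⟨x, hxS, hx⟩ := exists_lt_of_lt_csSup hSne ht.2
    exact hxS.2 t ⟨ht.1, hx.le⟩
  have hIooS : ∀ t ∈ Ioo (-1:ℝ) b, t ∈ S :=
    fun t ht => ⟨ht.1, fun u hu => hbpos u ⟨hu.1, lt_of_le_of_lt hu.2 ht.2⟩⟩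
  have hbmono : StrictMonoOn y (Icc (-1) b) :=
    strictMonoOn_of_deriv_pos (convex_Icc _ _) hyc.continuousOn
      (by rw [interior_Icc]; exact fun u hu => hbpos u hu)
  have hyb_pos : 0 < y b := by
    have := hbmono ⟨le_rfl, hb_gt.le⟩ ⟨hb_gt.le, le_rfl⟩ hb_gt
    rwa [hinit] at this
  have hyb_le : y b ≤ y₀ := by
    by_contra h
    push_neg at h
    obtain ⟨t, ht, hyt⟩ := intermediate_value_Icc hb_gt.le hyc.continuousOn
      ⟨by rw [hinit]; exact hy₀.le, h.le⟩
    have ht1 : t ≠ -1 := by intro he; rw [he, hinit] at hyt; linarith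
    have ht2 : t ≠ b := by intro he; rw [he] at hyt; linarith
    have htIoo : t ∈ Ioo (-1:ℝ) b := ⟨lt_of_le_of_ne ht.1 (Ne.symm ht1), lt_of_le_of_ne ht.2 ht2⟩
    have hp := hbpos t htIoo
    have he := energy t
    rw [hyt, hFy₀] at he
    nlinarith
  have hyb : y b = y₀ := by
    by_contra h
    have hybIoo : y b ∈ Ioo 0 y₀ := ⟨hyb_pos, lt_of_le_of_ne hyb_le h⟩
    have he := energy b
    have hFyb := hFneg _ hybIoo
    have hb' : deriv y b ≠ 0 := by intro h0; rw [h0] at he; nlinarith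
    have hb'nonneg : 0 ≤ deriv y b := by
      have hevIoo : Ioo (-1:ℝ) b ∈ 𝓝[<] b := Ioo_mem_nhdsLT_of_mem ⟨hb_gt, le_rfl⟩
      apply ge_of_tendsto ((hyc'.tendsto b).mono_left (nhdsWithin_le_nhds (s := Iio b)))
      filter_upwards [hevIoo] with t ht
      exact (hbpos t ht).le
    have hb'pos : 0 < deriv y b := lt_of_le_of_ne hb'nonneg (Ne.symm hb')
    have hev : {t | 0 < deriv y t} ∈ 𝓝 b := hyc'.continuousAt (x := b) (Ioi_mem_nhds hb'pos)
    obtain ⟨δ, hδ, hball⟩ := Metric.mem_nhds_iff.mp hev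
    have hmem : b + δ/2 ∈ S := by
      refine ⟨by linarith, fun t ht => ?_⟩
      rcases lt_or_ge t b with h1 | h1
      · exact hbpos t ⟨ht.1, h1⟩
      · exact hball (by rw [Metric.mem_ball, Real.dist_eq, abs_lt]; constructor <;>
          [linarith [ht.2]; linarith [ht.2]])
    have := le_csSup hSbdd hmem
    linarith
  have hb'0 : deriv y b = 0 := by
    have he := energy b
    rw [hyb, hFy₀] at he
    nlinarith
  have hb0 : b = 0 := by
    have hevIoo : Ioo (-1:ℝ) b ∈ 𝓝[<] b := Ioo_mem_nhdsLT_of_mem ⟨hb_gt, le_rfl⟩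
    have ht1 : Tendsto (fun x : ℝ => x + 1) (𝓝[<] b) (𝓝 (b + 1)) :=
      ((continuous_id.add continuous_const).tendsto b).mono_left
        (nhdsWithin_le_nhds (s := Iio b))
    have ht2 : Tendsto (fun x => Q (y x)) (𝓝[<] b) (𝓝 (Q y₀)) := by
      have hy_t : Tendsto y (𝓝[<] b) (𝓝[Icc 0 y₀] y₀) := by
        rw [tendsto_nhdsWithin_iff]
        constructor
        · have h := (hyc.tendsto b).mono_left (nhdsWithin_le_nhds (s := Iio b))
          rwa [hyb] at h
        · filter_upwards [hevIoo] with a ha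
          have := hSyIoo a (hIooS a ha) a ⟨ha.1, le_rfl⟩
          exact ⟨this.1.le, this.2.le⟩
      exact (hQcont y₀ ⟨hy₀.le, le_rfl⟩).tendsto.comp hy_t
    have heq2 : (fun x : ℝ => x + 1) =ᶠ[𝓝[<] b] fun x => Q (y x) := by
      filter_upwards [hevIoo] with a ha
      exact hsub a (hIooS a ha)
    have := tendsto_nhds_unique (Filter.Tendsto.congr' heq2 ht1) ht2
    rw [hint'] at this
    linarith
  have hy0 : y 0 = y₀ := hb0 ▸ hyb
  have hy'0 : deriv y 0 = 0 := hb0 ▸ hb'0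
  have goal4 : ∀ x ∈ Ioo (-1:ℝ) 0, 0 < deriv y x := by
    intro x hx; exact hbpos x ⟨hx.1, by rw [hb0]; exact hx.2⟩
  -- reflections via ODE uniqueness
  have hsym : ∀ x : ℝ, y (-x) = y x := by
    have hzC : ContDiff ℝ 2 (fun x : ℝ => y (-x)) := hy.comp (contDiff_id.neg)
    have hz' : ∀ x : ℝ, deriv (fun t : ℝ => y (-t)) x = -deriv y (-x) := by
      intro x
      have h : HasDerivAt (fun t : ℝ => y (-t)) (deriv y (-x) * (-1)) x :=
        (hyd (-x)).hasDerivAt.comp x (hasDerivAt_neg x)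
      rw [h.deriv]; ring
    have hz'' : ∀ x : ℝ, deriv (deriv (fun t : ℝ => y (-t))) x
        = -deriv F ((fun t : ℝ => y (-t)) x) := by
      intro x
      have hfun : deriv (fun t : ℝ => y (-t)) = fun t : ℝ => -deriv y (-t) := funext hz'
      rw [hfun]
      have h : HasDerivAt (fun t : ℝ => deriv y (-t)) (deriv (deriv y) (-x) * (-1)) x :=
        (hyd' (-x)).hasDerivAt.comp x (hasDerivAt_neg x)
      rw [HasDerivAt.deriv (f := fun t : ℝ => -deriv y (-t)) h.neg, hye (-x)]
      ring
    have := ode2_unique F hF (fun t : ℝ => y (-t)) y hzC hy hz'' hye 0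
      (by norm_num) (by rw [hz' 0]; norm_num [hy'0])
    exact this
  have goal6 : y 1 = 0 := by
    have := hsym (-1)
    norm_num at this
    rw [this, hinit]
  have goal5 : ∀ x ∈ Ioo (0:ℝ) 1, deriv y x < 0 := by
    intro x hx
    have hfun : (fun t : ℝ => y (-t)) = y := funext hsym
    have hz' : deriv (fun t : ℝ => y (-t)) x = -deriv y (-x) := by
      have h : HasDerivAt (fun t : ℝ => y (-t)) (deriv y (-x) * (-1)) x :=
        (hyd (-x)).hasDerivAt.comp x (hasDerivAt_neg x)
      rw [h.deriv]; ring
    rw [hfun] at hz'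
    rw [hz']
    have : 0 < deriv y (-x) := goal4 (-x) ⟨by linarith [hx.2], by linarith [hx.1]⟩
    linarith
  -- periodicity
  have hrefl : ∀ x : ℝ, y (-2 - x) = y x := by
    have hwC : ContDiff ℝ 2 (fun x : ℝ => y (-2 - x)) :=
      hy.comp ((contDiff_const (c := (-2:ℝ))).sub contDiff_id)
    have hgd : ∀ x : ℝ, HasDerivAt (fun t : ℝ => -2 - t) (-1 : ℝ) x := by
      intro x
      simpa using (hasDerivAt_id x).const_sub (-2 : ℝ)
    have hw' : ∀ x : ℝ, deriv (fun t : ℝ => y (-2 - t)) x = -deriv y (-2 - x) := by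
      intro x
      have h : HasDerivAt (fun t : ℝ => y (-2 - t)) (deriv y (-2 - x) * (-1)) x :=
        (hyd (-2 - x)).hasDerivAt.comp x (hgd x)
      rw [h.deriv]; ring
    have hw'' : ∀ x : ℝ, deriv (deriv (fun t : ℝ => y (-2 - t))) x
        = -deriv F ((fun t : ℝ => y (-2 - t)) x) := by
      intro x
      have hfun : deriv (fun t : ℝ => y (-2 - t)) = fun t : ℝ => -deriv y (-2 - t) :=
        funext hw'
      rw [hfun]
      have h : HasDerivAt (fun t : ℝ => deriv y (-2 - t)) (deriv (deriv y) (-2 - x) * (-1)) x :=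
        (hyd' (-2 - x)).hasDerivAt.comp x (hgd x)
      rw [HasDerivAt.deriv (f := fun t : ℝ => -deriv y (-2 - t)) h.neg, hye (-2 - x)]
      ring
    have := ode2_unique F hF (fun t : ℝ => y (-2 - t)) y hwC hy hw'' hye (-1)
      (by norm_num) (by rw [hw' (-1)]; norm_num [hinit'])
    exact this
  have hper : Function.Periodic y 2 := by
    intro x
    have h1 := hsym (x + 2)
    have h2 := hrefl x
    have h3 : -(x + 2) = -2 - x := by ring
    rw [h3] at h1
    rw [← h1, h2]
  -- global maximum
  have goal3 : ∀ x : ℝ, y x ≤ y 0 := by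
    have hmono0 : StrictMonoOn y (Icc (-1:ℝ) 0) := by rw [← hb0]; exact hbmono
    have hmax1 : ∀ t ∈ Icc (-1:ℝ) 0, y t ≤ y 0 := by
      intro t ht
      rcases eq_or_lt_of_le ht.2 with he | hlt
      · rw [he]
      · exact (hmono0 ht ⟨by norm_num, le_rfl⟩ hlt).le
    intro x
    obtain ⟨t, ht, hxt⟩ := hper.exists_mem_Ico (by norm_num : (0:ℝ) < 2) x (-1)
    rw [hxt]
    rcases le_or_gt t 0 with h1 | h1
    · exact hmax1 t ⟨ht.1, h1⟩
    · rw [← hsym t]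
      refine hmax1 (-t) ⟨by linarith [ht.2], by linarith⟩
  exact ⟨hsym, hy0, goal3, goal4, goal5, goal6⟩
end

section
/- Let F be smooth with F(0) = 0 and F'(0) < 0, and suppose F(y) < 0 for all y > 0. Then the initial value problem y'' + F'(y) = 0, y(-1) = y'(-1) = 0 has no nontrivial periodic solution. -/
/-- If `F` is smooth with `F(0) = 0`, `F'(0) < 0` and `F(y) < 0` for all `y > 0`,
then the IVP `y'' + F'(y) = 0`, `y(-1) = y'(-1) = 0` has no nontrivial periodic solution. -/
theorem no_nontrivial_periodic_solution (F : ℝ → ℝ)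
    (hF : ContDiff ℝ (⊤ : ℕ∞) F) (hF0 : F 0 = 0) (hF0' : deriv F 0 < 0)
    (hFneg : ∀ s : ℝ, 0 < s → F s < 0) :
    ¬ ∃ y : ℝ → ℝ, ContDiff ℝ 2 y ∧
      (∀ x : ℝ, deriv (deriv y) x + deriv F (y x) = 0) ∧
      y (-1) = 0 ∧ deriv y (-1) = 0 ∧
      (∃ x : ℝ, y x ≠ 0) ∧
      (∃ T : ℝ, 0 < T ∧ Function.Periodic y T) := by
  rintro ⟨y, hy, hode, hy0, hy'0, ⟨x0, hx0⟩, T, hT, hper⟩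
  have hFd : Differentiable ℝ F := hF.differentiable (by simp)
  have hyd : Differentiable ℝ y := hy.differentiable (by norm_num)
  have hy'd : Differentiable ℝ (deriv y) := by
    have := (contDiff_succ_iff_deriv (n := 1)).mp (by exact_mod_cast hy)
    exact this.2.2.differentiable one_ne_zero
  -- energy
  set E : ℝ → ℝ := fun x => deriv y x * deriv y x / 2 + F (y x) with hE
  have hE' : ∀ x, HasDerivAt E 0 x := by
    intro x
    have h1 : HasDerivAt (fun x => deriv y x * deriv y x / 2)
        ((deriv (deriv y) x * deriv y x + deriv y x * deriv (deriv y) x) / 2) x :=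
      (((hy'd x).hasDerivAt.mul (hy'd x).hasDerivAt)).div_const 2
    have h2 : HasDerivAt (fun x => F (y x)) (deriv F (y x) * deriv y x) x :=
      (hFd (y x)).hasDerivAt.comp x (hyd x).hasDerivAt
    have := h1.add h2
    have hz : (deriv (deriv y) x * deriv y x + deriv y x * deriv (deriv y) x) / 2
        + deriv F (y x) * deriv y x = 0 := by
      have := hode x
      linear_combination (deriv y x) * this
    rwa [hz] at this
  have hEconst : ∀ x, E x = 0 := by
    intro x
    have : E x = E (-1) :=
      is_const_of_deriv_eq_zero (fun z => (hE' z).differentiableAt) (fun z => (hE' z).deriv) x (-1)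
    rw [this]
    simp [hE, hy0, hy'0, hF0]
  have hFy : ∀ x, F (y x) ≤ 0 := by
    intro x
    have h := hEconst x
    simp only [hE] at h
    nlinarith [sq_nonneg (deriv y x)]
  -- max point
  obtain ⟨xM, hxMmem, hxMmax⟩ :=
    (isCompact_Icc (a := (-1:ℝ)) (b := -1 + T)).exists_isMaxOn
      (Set.nonempty_Icc.mpr (by linarith)) hy.continuous.continuousOn
  have hglob : ∀ x, y x ≤ y xM := by
    intro x
    obtain ⟨n, hn⟩ := existsUnique_add_zsmul_mem_Ico hT x (-1)
    have : y (x + n • T) = y x := by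
      simpa using (hper.zsmul n) x
    rw [← this]
    exact hxMmax (Set.mem_Icc_of_Ico (by simpa using hn.1))
  have hderivM : deriv y xM = 0 := by
    have : IsLocalMax y xM := by
      apply IsMaxOn.isLocalMax (s := Set.univ)
      · intro z _; exact hglob z
      · exact Filter.univ_mem
    exact this.deriv_eq_zero
  have hFM : F (y xM) = 0 := by
    have := hEconst xM
    rw [hE] at this
    simp only [hderivM] at this
    linarith [this]
  have hyM : y xM ≤ 0 := by
    by_contra h
    exact absurd hFM (ne_of_lt (hFneg _ (lt_of_not_ge h)))
  have hyle : ∀ x, y x ≤ 0 := fun x => le_trans (hglob x) hyM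
  have hx0neg : y x0 < 0 := lt_of_le_of_ne (hyle x0) hx0
  -- F positive on small negative interval
  have htend : Filter.Tendsto (slope F 0) (nhdsWithin 0 {0}ᶜ) (nhds (deriv F 0)) :=
    hasDerivAt_iff_tendsto_slope.mp (hFd 0).hasDerivAt
  have hev : ∀ᶠ s in nhdsWithin 0 {0}ᶜ, slope F 0 s < 0 :=
    htend.eventually_lt_const hF0'
  obtain ⟨δ, hδ, hδs⟩ := Metric.mem_nhdsWithin_iff.mp hev
  set s : ℝ := max (y x0 / 2) (-δ/2) with hs
  have hsneg : s < 0 := by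
    apply max_lt <;> linarith
  have hsgt : y x0 < s := lt_of_lt_of_le (by linarith) (le_max_left _ _)
  have hsδ : -δ < s := lt_of_lt_of_le (by linarith) (le_max_right _ _)
  have hFs : 0 < F s := by
    have h1 : slope F 0 s < 0 := by
      apply hδs
      constructor
      · rw [Metric.mem_ball, Real.dist_eq, sub_zero, abs_lt]
        constructor <;> linarith
      · simp only [Set.mem_compl_iff, Set.mem_singleton_iff]
        exact hsneg.ne
    rw [slope_def_field] at h1
    have : F s / s < 0 := by simpa [hF0] using h1
    rcases div_neg_iff.mp this with ⟨h, _⟩ | ⟨_, h⟩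
    · exact h
    · linarith
  -- IVT
  have hmem : s ∈ Set.uIcc (y (-1)) (y x0) := by
    rw [hy0]
    apply Set.mem_uIcc.mpr
    right
    exact ⟨hsgt.le, hsneg.le⟩
  obtain ⟨x1, _, hx1⟩ := intermediate_value_uIcc hy.continuous.continuousOn hmem
  have := hFy x1
  rw [hx1] at this
  linarith
end

section
/- For fixed b ∈ ℝ, the function I(b,c) = √3 ∫₀¹ dt / √( t(1−t)(y₀(c) t − y₁(c)) ), where y₀(c) = (−3b+√(9b²+24c))/2 and y₁(c) = −(3b+√(9b²+24c))/2, is strictly decreasing in c on its domain of definition (c > 0 if b ≤ 0; c > −3b²/8, c ≠ 0 if b > 0), and I(b,c) → 0 as c → +∞. -/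
open Set MeasureTheory Filter

namespace KdVAux

/-- The square root `√(9b² + 24c)`. -/
noncomputable def S (b c : ℝ) : ℝ := Real.sqrt (9 * b ^ 2 + 24 * c)

/-- The integrand of the period integral. -/
noncomputable def F (b c t : ℝ) : ℝ :=
  1 / Real.sqrt (t * (1 - t) *
    ((-3 * b + Real.sqrt (9 * b ^ 2 + 24 * c)) / 2 * t -
      -(3 * b + Real.sqrt (9 * b ^ 2 + 24 * c)) / 2))

/-- The lower bound for the linear factor. -/
noncomputable def M (b c : ℝ) : ℝ := min ((3 * b + S b c) / 2) (S b c)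

lemma M_pos {b c : ℝ} (hS : 0 < S b c) (hA : 0 < 3 * b + S b c) : 0 < M b c :=
  lt_min (by linarith) hS

lemma g_lb {b c : ℝ} {t : ℝ} (ht0 : 0 ≤ t) (ht1 : t ≤ 1) :
    M b c ≤ (-3 * b + Real.sqrt (9 * b ^ 2 + 24 * c)) / 2 * t -
      -(3 * b + Real.sqrt (9 * b ^ 2 + 24 * c)) / 2 := by
  have h1 : M b c ≤ (3 * b + S b c) / 2 := min_le_left _ _
  have h2 : M b c ≤ S b c := min_le_right _ _
  have e1 : (1 - t) * M b c ≤ (1 - t) * ((3 * b + S b c) / 2) :=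
    mul_le_mul_of_nonneg_left h1 (by linarith)
  have e2 : t * M b c ≤ t * S b c := mul_le_mul_of_nonneg_left h2 ht0
  have : S b c = Real.sqrt (9 * b ^ 2 + 24 * c) := rfl
  nlinarith [e1, e2]

lemma g_pos {b c : ℝ} (hS : 0 < S b c) (hA : 0 < 3 * b + S b c) {t : ℝ}
    (ht0 : 0 ≤ t) (ht1 : t ≤ 1) :
    0 < (-3 * b + Real.sqrt (9 * b ^ 2 + 24 * c)) / 2 * t -
      -(3 * b + Real.sqrt (9 * b ^ 2 + 24 * c)) / 2 :=
  lt_of_lt_of_le (M_pos hS hA) (g_lb ht0 ht1)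

lemma F_nonneg (b c t : ℝ) : 0 ≤ F b c t :=
  div_nonneg zero_le_one (Real.sqrt_nonneg _)

lemma F_bound {b c : ℝ} (hS : 0 < S b c) (hA : 0 < 3 * b + S b c) {t : ℝ}
    (ht : t ∈ Ioo (0 : ℝ) 1) :
    F b c t ≤ (Real.sqrt (M b c))⁻¹ * (1 / Real.sqrt (t * (1 - t))) := by
  obtain ⟨ht0, ht1⟩ := ht
  have hm := M_pos hS hA
  have htt : 0 < t * (1 - t) := mul_pos ht0 (by linarith)
  have hle : t * (1 - t) * M b c ≤ t * (1 - t) *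
      ((-3 * b + Real.sqrt (9 * b ^ 2 + 24 * c)) / 2 * t -
        -(3 * b + Real.sqrt (9 * b ^ 2 + 24 * c)) / 2) :=
    mul_le_mul_of_nonneg_left (g_lb ht0.le ht1.le) htt.le
  have h1 : Real.sqrt (t * (1 - t) * M b c) ≤ Real.sqrt (t * (1 - t) *
      ((-3 * b + Real.sqrt (9 * b ^ 2 + 24 * c)) / 2 * t -
        -(3 * b + Real.sqrt (9 * b ^ 2 + 24 * c)) / 2)) := Real.sqrt_le_sqrt hle
  have h2 : 0 < Real.sqrt (t * (1 - t) * M b c) := Real.sqrt_pos.2 (mul_pos htt hm)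
  calc F b c t ≤ 1 / Real.sqrt (t * (1 - t) * M b c) := one_div_le_one_div_of_le h2 h1
    _ = (Real.sqrt (M b c))⁻¹ * (1 / Real.sqrt (t * (1 - t))) := by
        rw [Real.sqrt_mul htt.le, one_div, one_div, mul_inv]; ring

lemma integrableOn_aux : IntegrableOn (fun t : ℝ => 1 / Real.sqrt (t * (1 - t)))
    (Ioo (0 : ℝ) 1) := by
  have base : IntervalIntegrable (fun x : ℝ => x ^ (-(1 / 2) : ℝ)) volume 0 1 :=
    intervalIntegral.intervalIntegrable_rpow' (by norm_num)
  have i1 : IntegrableOn (fun t : ℝ => (Real.sqrt t)⁻¹) (Ioo (0 : ℝ) 1) := by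
    refine ((base.1.mono_set Ioo_subset_Ioc_self).congr_fun ?_ measurableSet_Ioo)
    intro x hx
    show x ^ (-(1 / 2) : ℝ) = (Real.sqrt x)⁻¹
    rw [Real.sqrt_eq_rpow, ← Real.rpow_neg hx.1.le]
  have i2 : IntegrableOn (fun t : ℝ => (Real.sqrt (1 - t))⁻¹) (Ioo (0 : ℝ) 1) := by
    have := base.comp_sub_left 1
    norm_num at this
    refine ((this.2.mono_set Ioo_subset_Ioc_self).congr_fun ?_ measurableSet_Ioo)
    intro x hx
    show (1 - x) ^ (-(1 / 2) : ℝ) = (Real.sqrt (1 - x))⁻¹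
    rw [Real.sqrt_eq_rpow, ← Real.rpow_neg (by linarith [hx.2] : (0:ℝ) ≤ 1 - x)]
  have hmeas : Measurable (fun t : ℝ => 1 / Real.sqrt (t * (1 - t))) := by
    have : Measurable (fun t : ℝ => Real.sqrt (t * (1 - t))) :=
      Real.continuous_sqrt.measurable.comp
        ((measurable_id.mul (measurable_const.sub measurable_id)))
    exact measurable_const.div this
  refine Integrable.mono' ((i1.add i2).const_mul (Real.sqrt 2)) hmeas.aestronglyMeasurable ?_
  refine ae_restrict_of_forall_mem measurableSet_Ioo ?_
  intro t ht
  obtain ⟨ht0, ht1⟩ := ht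
  have hnn : 0 ≤ 1 / Real.sqrt (t * (1 - t)) := div_nonneg zero_le_one (Real.sqrt_nonneg _)
  rw [Real.norm_eq_abs, abs_of_nonneg hnn]
  have hnn2 : 0 ≤ Real.sqrt 2 * (Real.sqrt (1 - t))⁻¹ :=
    mul_nonneg (Real.sqrt_nonneg _) (inv_nonneg.2 (Real.sqrt_nonneg _))
  have hnn3 : 0 ≤ Real.sqrt 2 * (Real.sqrt t)⁻¹ :=
    mul_nonneg (Real.sqrt_nonneg _) (inv_nonneg.2 (Real.sqrt_nonneg _))
  rcases le_total t (1 / 2) with hc | hc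
  · have h5 : t / 2 ≤ t * (1 - t) := by nlinarith
    have hpos : 0 < Real.sqrt (t / 2) := Real.sqrt_pos.2 (by linarith)
    have hb1 : 1 / Real.sqrt (t * (1 - t)) ≤ 1 / Real.sqrt (t / 2) :=
      one_div_le_one_div_of_le hpos (Real.sqrt_le_sqrt h5)
    have heq : 1 / Real.sqrt (t / 2) = Real.sqrt 2 * (Real.sqrt t)⁻¹ := by
      rw [Real.sqrt_div ht0.le, one_div_div, div_eq_mul_inv]
    calc 1 / Real.sqrt (t * (1 - t)) ≤ Real.sqrt 2 * (Real.sqrt t)⁻¹ := heq ▸ hb1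
      _ ≤ Real.sqrt 2 * ((Real.sqrt t)⁻¹ + (Real.sqrt (1 - t))⁻¹) := by
          rw [mul_add]; linarith
  · have h5 : (1 - t) / 2 ≤ t * (1 - t) := by nlinarith
    have hpos : 0 < Real.sqrt ((1 - t) / 2) := Real.sqrt_pos.2 (by linarith)
    have hb1 : 1 / Real.sqrt (t * (1 - t)) ≤ 1 / Real.sqrt ((1 - t) / 2) :=
      one_div_le_one_div_of_le hpos (Real.sqrt_le_sqrt h5)
    have heq : 1 / Real.sqrt ((1 - t) / 2) = Real.sqrt 2 * (Real.sqrt (1 - t))⁻¹ := by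
      rw [Real.sqrt_div (by linarith : (0:ℝ) ≤ 1 - t), one_div_div, div_eq_mul_inv]
    calc 1 / Real.sqrt (t * (1 - t)) ≤ Real.sqrt 2 * (Real.sqrt (1 - t))⁻¹ := heq ▸ hb1
      _ ≤ Real.sqrt 2 * ((Real.sqrt t)⁻¹ + (Real.sqrt (1 - t))⁻¹) := by
          rw [mul_add]; linarith

lemma F_measurable (b c : ℝ) : Measurable (F b c) := by
  unfold F
  have : Measurable (fun t : ℝ => Real.sqrt (t * (1 - t) *
      ((-3 * b + Real.sqrt (9 * b ^ 2 + 24 * c)) / 2 * t -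
        -(3 * b + Real.sqrt (9 * b ^ 2 + 24 * c)) / 2))) := by
    apply Real.continuous_sqrt.measurable.comp
    exact ((measurable_id.mul (measurable_const.sub measurable_id)).mul
      ((measurable_const.mul measurable_id).sub measurable_const))
  exact measurable_const.div this

lemma F_integrableOn {b c : ℝ} (hS : 0 < S b c) (hA : 0 < 3 * b + S b c) :
    IntegrableOn (F b c) (Ioo (0 : ℝ) 1) := by
  refine Integrable.mono' (integrableOn_aux.const_mul (Real.sqrt (M b c))⁻¹)
    (F_measurable b c).aestronglyMeasurable ?_
  refine ae_restrict_of_forall_mem measurableSet_Ioo ?_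
  intro t ht
  rw [Real.norm_eq_abs, abs_of_nonneg (F_nonneg b c t)]
  exact F_bound hS hA ht

lemma F_lt {b c₁ c₂ : ℝ} (hS1 : 0 < S b c₁) (hA1 : 0 < 3 * b + S b c₁)
    (hlt : S b c₁ < S b c₂) {t : ℝ} (ht : t ∈ Ioo (0 : ℝ) 1) :
    F b c₂ t < F b c₁ t := by
  obtain ⟨ht0, ht1⟩ := ht
  have htt : 0 < t * (1 - t) := mul_pos ht0 (by linarith)
  have hg1 : 0 < (-3 * b + Real.sqrt (9 * b ^ 2 + 24 * c₁)) / 2 * t -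
      -(3 * b + Real.sqrt (9 * b ^ 2 + 24 * c₁)) / 2 := g_pos hS1 hA1 ht0.le ht1.le
  have hgg : (-3 * b + Real.sqrt (9 * b ^ 2 + 24 * c₁)) / 2 * t -
      -(3 * b + Real.sqrt (9 * b ^ 2 + 24 * c₁)) / 2 <
      (-3 * b + Real.sqrt (9 * b ^ 2 + 24 * c₂)) / 2 * t -
      -(3 * b + Real.sqrt (9 * b ^ 2 + 24 * c₂)) / 2 := by
    have h' : S b c₁ < S b c₂ := hlt
    unfold S at h'
    nlinarith [h', ht0]
  have hP : t * (1 - t) * ((-3 * b + Real.sqrt (9 * b ^ 2 + 24 * c₁)) / 2 * t -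
      -(3 * b + Real.sqrt (9 * b ^ 2 + 24 * c₁)) / 2) <
      t * (1 - t) * ((-3 * b + Real.sqrt (9 * b ^ 2 + 24 * c₂)) / 2 * t -
      -(3 * b + Real.sqrt (9 * b ^ 2 + 24 * c₂)) / 2) :=
    mul_lt_mul_of_pos_left hgg htt
  have hP1 : 0 < t * (1 - t) * ((-3 * b + Real.sqrt (9 * b ^ 2 + 24 * c₁)) / 2 * t -
      -(3 * b + Real.sqrt (9 * b ^ 2 + 24 * c₁)) / 2) := mul_pos htt hg1
  have hsq : Real.sqrt (t * (1 - t) * ((-3 * b + Real.sqrt (9 * b ^ 2 + 24 * c₁)) / 2 * t -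
      -(3 * b + Real.sqrt (9 * b ^ 2 + 24 * c₁)) / 2)) <
      Real.sqrt (t * (1 - t) * ((-3 * b + Real.sqrt (9 * b ^ 2 + 24 * c₂)) / 2 * t -
      -(3 * b + Real.sqrt (9 * b ^ 2 + 24 * c₂)) / 2)) := Real.sqrt_lt_sqrt hP1.le hP
  exact one_div_lt_one_div_of_lt (Real.sqrt_pos.2 hP1) hsq

lemma facts_of_pos {b c : ℝ} (hc : 0 < c) : 0 < S b c ∧ 0 < 3 * b + S b c := by
  have hD : 0 < 9 * b ^ 2 + 24 * c := by nlinarith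
  have hS : 0 < S b c := Real.sqrt_pos.2 hD
  have h9 : Real.sqrt ((3 * b) ^ 2) < Real.sqrt (9 * b ^ 2 + 24 * c) :=
    Real.sqrt_lt_sqrt (sq_nonneg _) (by nlinarith)
  rw [Real.sqrt_sq_eq_abs] at h9
  have : -(3 * b) < S b c := lt_of_le_of_lt (neg_le_abs _) h9
  exact ⟨hS, by linarith⟩

lemma facts_of_adm {b c : ℝ}
    (hadm : if 0 < b then (-(3 * b ^ 2 / 8) < c ∧ c ≠ 0) else 0 < c) :
    0 < S b c ∧ 0 < 3 * b + S b c ∧ 0 ≤ 9 * b ^ 2 + 24 * c := by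
  by_cases hb : 0 < b
  · rw [if_pos hb] at hadm
    obtain ⟨h1, _⟩ := hadm
    have hD : 0 < 9 * b ^ 2 + 24 * c := by nlinarith
    have hS : 0 < S b c := Real.sqrt_pos.2 hD
    exact ⟨hS, by linarith, hD.le⟩
  · rw [if_neg hb] at hadm
    obtain ⟨hS, hA⟩ := facts_of_pos (b := b) hadm
    have hD : 0 < 9 * b ^ 2 + 24 * c := by nlinarith
    exact ⟨hS, hA, hD.le⟩

lemma int_lt {b c₁ c₂ : ℝ} (hS1 : 0 < S b c₁) (hA1 : 0 < 3 * b + S b c₁)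
    (hS2 : 0 < S b c₂) (hA2 : 0 < 3 * b + S b c₂) (hlt : S b c₁ < S b c₂) :
    ∫ t in Ioo (0:ℝ) 1, F b c₂ t < ∫ t in Ioo (0:ℝ) 1, F b c₁ t := by
  have hi1 := F_integrableOn hS1 hA1
  have hi2 := F_integrableOn hS2 hA2
  have hnn : 0 ≤ᵐ[volume.restrict (Ioo (0:ℝ) 1)] fun t => F b c₁ t - F b c₂ t := by
    refine ae_restrict_of_forall_mem measurableSet_Ioo ?_
    intro t ht
    exact sub_nonneg.2 (le_of_lt (F_lt hS1 hA1 hlt ht))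
  have hint : IntegrableOn (fun t => F b c₁ t - F b c₂ t) (Ioo (0:ℝ) 1) volume :=
    hi1.sub hi2
  have hsupp : 0 < volume (Function.support (fun t => F b c₁ t - F b c₂ t) ∩ Ioo (0:ℝ) 1) := by
    have hsub : Ioo (0:ℝ) 1 ⊆ Function.support (fun t => F b c₁ t - F b c₂ t) ∩ Ioo 0 1 :=
      fun t ht => ⟨ne_of_gt (sub_pos.2 (F_lt hS1 hA1 hlt ht)), ht⟩
    calc (0 : ENNReal) < volume (Ioo (0:ℝ) 1) := by simp [Real.volume_Ioo]
      _ ≤ _ := measure_mono hsub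
  have key : 0 < ∫ t in Ioo (0:ℝ) 1, (F b c₁ t - F b c₂ t) :=
    (setIntegral_pos_iff_support_of_nonneg_ae hnn hint).2 hsupp
  rw [integral_sub hi1 hi2] at key
  linarith

lemma int_le {b c : ℝ} (hc : 0 < c) :
    ∫ t in Ioo (0:ℝ) 1, F b c t ≤
      (Real.sqrt (M b c))⁻¹ * ∫ t in Ioo (0:ℝ) 1, 1 / Real.sqrt (t * (1 - t)) := by
  obtain ⟨hS, hA⟩ := facts_of_pos (b := b) hc
  rw [← integral_const_mul]
  refine setIntegral_mono_on (F_integrableOn hS hA)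
    (integrableOn_aux.const_mul _) measurableSet_Ioo ?_
  intro t ht
  exact F_bound hS hA ht

lemma tendsto_sqrt_atTop : Tendsto Real.sqrt atTop atTop := by
  have : Tendsto (fun x : ℝ => x ^ ((1:ℝ)/2)) atTop atTop :=
    tendsto_rpow_atTop (by norm_num)
  refine this.congr fun x => ?_
  rw [Real.sqrt_eq_rpow]

lemma tendsto_M_atTop (b : ℝ) : Tendsto (fun c => M b c) atTop atTop := by
  have hlin : Tendsto (fun c : ℝ => 9 * b ^ 2 + 24 * c) atTop atTop :=
    tendsto_atTop_add_const_left _ _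
      (Tendsto.const_mul_atTop (by norm_num : (0:ℝ) < 24) tendsto_id)
  have hSt : Tendsto (fun c => S b c) atTop atTop := tendsto_sqrt_atTop.comp hlin
  have hlow : Tendsto (fun c => (S b c - 3 * |b|) / 2) atTop atTop := by
    refine Tendsto.atTop_div_const (by norm_num) ?_
    have := tendsto_atTop_add_const_right atTop (-(3 * |b|)) hSt
    refine this.congr fun c => ?_
    ring
  refine tendsto_atTop_mono (fun c => ?_) hlow
  refine le_min ?_ ?_
  · have : -b ≤ |b| := neg_le_abs _
    linarith
  · have h1 : 0 ≤ S b c := Real.sqrt_nonneg _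
    have h2 : 0 ≤ |b| := abs_nonneg _
    linarith

theorem main (b : ℝ) :
    (∀ c₁ c₂ : ℝ,
        (if 0 < b then (-(3 * b ^ 2 / 8) < c₁ ∧ c₁ ≠ 0) else 0 < c₁) →
        (if 0 < b then (-(3 * b ^ 2 / 8) < c₂ ∧ c₂ ≠ 0) else 0 < c₂) →
        c₁ < c₂ →
        Real.sqrt 3 * (∫ t in Ioo (0:ℝ) 1, F b c₂ t) <
          Real.sqrt 3 * (∫ t in Ioo (0:ℝ) 1, F b c₁ t)) ∧
      Tendsto (fun c => Real.sqrt 3 * ∫ t in Ioo (0:ℝ) 1, F b c t) atTop (nhds 0) := by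
  constructor
  · intro c₁ c₂ h1 h2 hlt
    obtain ⟨hS1, hA1, hD1⟩ := facts_of_adm h1
    obtain ⟨hS2, hA2, hD2⟩ := facts_of_adm h2
    have hs : S b c₁ < S b c₂ := Real.sqrt_lt_sqrt hD1 (by linarith)
    exact mul_lt_mul_of_pos_left (int_lt hS1 hA1 hS2 hA2 hs)
      (Real.sqrt_pos.2 (by norm_num))
  · set K := ∫ t in Ioo (0:ℝ) 1, 1 / Real.sqrt (t * (1 - t)) with hK
    have hg0 : Tendsto (fun c => Real.sqrt 3 * ((Real.sqrt (M b c))⁻¹ * K)) atTop (nhds 0) := by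
      have h1 : Tendsto (fun c => (Real.sqrt (M b c))⁻¹) atTop (nhds 0) :=
        (tendsto_sqrt_atTop.comp (tendsto_M_atTop b)).inv_tendsto_atTop
      have := ((h1.mul_const K).const_mul (Real.sqrt 3))
      simpa using this
    refine squeeze_zero' ?_ ?_ hg0
    · filter_upwards with c
      exact mul_nonneg (Real.sqrt_nonneg _)
        (setIntegral_nonneg measurableSet_Ioo fun t _ => F_nonneg b c t)
    · filter_upwards [eventually_gt_atTop (0:ℝ)] with c hc
      have := int_le (b := b) hc
      have h3 : (0:ℝ) ≤ Real.sqrt 3 := Real.sqrt_nonneg _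
      calc Real.sqrt 3 * ∫ t in Ioo (0:ℝ) 1, F b c t
          ≤ Real.sqrt 3 * ((Real.sqrt (M b c))⁻¹ * K) := by
            exact mul_le_mul_of_nonneg_left this h3

end KdVAux

/-- For fixed `b`, the period integral `I(b,c)` is strictly decreasing in `c` on its domain
and tends to `0` as `c → +∞`. -/
theorem kdv_period_integral_decreasing (b : ℝ) :
    let y₀ : ℝ → ℝ := fun c => (-3 * b + Real.sqrt (9 * b^2 + 24 * c)) / 2
    let y₁ : ℝ → ℝ := fun c => -(3 * b + Real.sqrt (9 * b^2 + 24 * c)) / 2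
    let I : ℝ → ℝ := fun c => Real.sqrt 3 *
      ∫ t in Ioo (0:ℝ) 1, 1 / Real.sqrt (t * (1 - t) * (y₀ c * t - y₁ c))
    let adm : ℝ → Prop := fun c => if 0 < b then (-(3 * b^2 / 8) < c ∧ c ≠ 0) else 0 < c
    (∀ c₁ c₂ : ℝ, adm c₁ → adm c₂ → c₁ < c₂ → I c₂ < I c₁) ∧
    Tendsto I atTop (nhds 0) := by
  intro y₀ y₁ I adm
  exact KdVAux.main b
end

section
/- For b > 0, lim_{c → 0} I(b,c) = π/√b, where I(b,c) = √3 ∫₀¹ dt/√(t(1−t)(y₀ t − y₁)) with y₀ = (−3b+√(9b²+24c))/2, y₁ = −(3b+√(9b²+24c))/2. In particular ∫₀¹ dt/√(t(1−t)) = π. -/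
/-!
`t ↦ arcsin (2t - 1)` is an antiderivative of `1/√(t(1-t))` on `(0,1)`, which gives the value `π`
and, the integrand being positive, its integrability. The weight `y₀ c t - y₁ c` is affine in `t`,
equal to `(3b + √(9b² + 24c))/2` at `t = 0` and `√(9b² + 24c)` at `t = 1`, so `I(b,c)/√3` lies
between `π/√M` and `π/√m` for the larger and smaller endpoint value `M`, `m`; both tend to
`π/√(3b)` as `c → 0`.
-/

open Set MeasureTheory Filter Real

lemma hasDerivAt_arcsin_two_mul_sub_one {t : ℝ} (ht : t ∈ Ioo (0 : ℝ) 1) :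
    HasDerivAt (fun t => arcsin (2 * t - 1)) (1 / √(t * (1 - t))) t := by
  obtain ⟨ht₀, ht₁⟩ := ht
  have hlin : HasDerivAt (fun t : ℝ => 2 * t - 1) 2 t := by
    simpa using ((hasDerivAt_id t).const_mul 2).sub_const 1
  have hsqrt : √(1 - (2 * t - 1) ^ 2) = 2 * √(t * (1 - t)) := by
    rw [show 1 - (2 * t - 1) ^ 2 = 2 ^ 2 * (t * (1 - t)) by ring, sqrt_mul (by positivity),
      sqrt_sq zero_le_two]
  have hpos : 0 < √(t * (1 - t)) := sqrt_pos.2 (mul_pos ht₀ (by linarith))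
  refine ((hasDerivAt_arcsin (by linarith) (by linarith)).comp t hlin).congr_deriv ?_
  rw [hsqrt]
  field_simp

lemma integrableOn_one_div_sqrt_mul_one_sub :
    IntegrableOn (fun t : ℝ => 1 / √(t * (1 - t))) (Ioo 0 1) :=
  (intervalIntegral.integrableOn_deriv_of_nonneg (by fun_prop)
    (fun _ ht => hasDerivAt_arcsin_two_mul_sub_one ht) (fun _ _ => by positivity)).mono_set
    Ioo_subset_Ioc_self

lemma integral_one_div_sqrt_mul_one_sub :
    ∫ t in Ioo (0 : ℝ) 1, 1 / √(t * (1 - t)) = π := by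
  have hftc := intervalIntegral.integral_eq_sub_of_hasDerivAt_of_le zero_le_one
    (f := fun t => arcsin (2 * t - 1)) (by fun_prop)
    (fun _ ht => hasDerivAt_arcsin_two_mul_sub_one ht)
    ((intervalIntegrable_iff_integrableOn_Ioo_of_le zero_le_one).2
      integrableOn_one_div_sqrt_mul_one_sub)
  rw [intervalIntegral.integral_of_le zero_le_one, integral_Ioc_eq_integral_Ioo] at hftc
  rw [hftc]
  norm_num

lemma one_div_sqrt_mul_one_sub_mul (t k : ℝ) (ht : t ∈ Ioo (0 : ℝ) 1) :
    1 / √(t * (1 - t) * k) = 1 / √(t * (1 - t)) * (1 / √k) := by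
  rw [sqrt_mul (mul_pos ht.1 (sub_pos.2 ht.2)).le, one_div_mul_one_div]

lemma integrableOn_one_div_sqrt_mul_one_sub_mul (k : ℝ) :
    IntegrableOn (fun t : ℝ => 1 / √(t * (1 - t) * k)) (Ioo 0 1) :=
  IntegrableOn.congr_fun (integrableOn_one_div_sqrt_mul_one_sub.mul_const _)
    (fun t ht => (one_div_sqrt_mul_one_sub_mul t k ht).symm) measurableSet_Ioo

lemma integral_one_div_sqrt_mul_one_sub_mul (k : ℝ) :
    ∫ t in Ioo (0 : ℝ) 1, 1 / √(t * (1 - t) * k) = π / √k := by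
  rw [setIntegral_congr_fun measurableSet_Ioo (fun t ht => one_div_sqrt_mul_one_sub_mul t k ht),
    integral_mul_const, integral_one_div_sqrt_mul_one_sub, mul_one_div]

lemma integral_one_div_sqrt_mul_one_sub_mul_mem_Icc {E : ℝ → ℝ} {m M : ℝ} (hm : 0 < m)
    (hE : Measurable E) (hEmM : ∀ t ∈ Ioo (0 : ℝ) 1, E t ∈ Icc m M) :
    ∫ t in Ioo (0 : ℝ) 1, 1 / √(t * (1 - t) * E t) ∈ Icc (π / √M) (π / √m) := by
  have hmono : ∀ {k l : ℝ}, 0 < k → k ≤ l → ∀ t ∈ Ioo (0 : ℝ) 1,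
      1 / √(t * (1 - t) * l) ≤ 1 / √(t * (1 - t) * k) := fun hk hkl t ht =>
    one_div_le_one_div_of_le (sqrt_pos.2 (mul_pos (mul_pos ht.1 (sub_pos.2 ht.2)) hk))
      (sqrt_le_sqrt (mul_le_mul_of_nonneg_left hkl (mul_pos ht.1 (sub_pos.2 ht.2)).le))
  have hle_m : ∀ t ∈ Ioo (0 : ℝ) 1, 1 / √(t * (1 - t) * E t) ≤ 1 / √(t * (1 - t) * m) :=
    fun t ht => hmono hm (hEmM t ht).1 t ht
  have hint : IntegrableOn (fun t => 1 / √(t * (1 - t) * E t)) (Ioo 0 1) := by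
    refine (integrableOn_one_div_sqrt_mul_one_sub_mul m).mono'
      (by fun_prop : Measurable fun t => 1 / √(t * (1 - t) * E t)).aestronglyMeasurable ?_
    filter_upwards [self_mem_ae_restrict measurableSet_Ioo] with t ht
    rw [norm_of_nonneg (by positivity)]
    exact hle_m t ht
  rw [← integral_one_div_sqrt_mul_one_sub_mul M, ← integral_one_div_sqrt_mul_one_sub_mul m]
  exact ⟨setIntegral_mono_on (integrableOn_one_div_sqrt_mul_one_sub_mul M) hint measurableSet_Ioo
      fun t ht => hmono (hm.trans_le (hEmM t ht).1) (hEmM t ht).2 t ht,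
    setIntegral_mono_on hint (integrableOn_one_div_sqrt_mul_one_sub_mul m) measurableSet_Ioo hle_m⟩

lemma tendsto_integral_one_div_sqrt_mul_one_sub_mul_affine {α : Type*} {l : Filter α}
    {A B : α → ℝ} {k : ℝ} (hk : 0 < k) (hA : Tendsto A l (nhds k)) (hB : Tendsto B l (nhds k)) :
    Tendsto (fun x => ∫ t in Ioo (0 : ℝ) 1, 1 / √(t * (1 - t) * ((1 - t) * A x + t * B x)))
      l (nhds (π / √k)) := by
  have hbound : ∀ {C : α → ℝ}, Tendsto C l (nhds k) → Tendsto (fun x => π / √(C x)) l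
      (nhds (π / √k)) := fun hC =>
    tendsto_const_nhds.div hC.sqrt (sqrt_pos.2 hk).ne'
  have hbetween : ∀ᶠ x in l,
      ∫ t in Ioo (0 : ℝ) 1, 1 / √(t * (1 - t) * ((1 - t) * A x + t * B x)) ∈
        Icc (π / √(max (A x) (B x))) (π / √(min (A x) (B x))) := by
    filter_upwards [(hA.min hB).eventually (lt_mem_nhds (by simpa using hk))] with x hx
    refine integral_one_div_sqrt_mul_one_sub_mul_mem_Icc hx (by fun_prop) fun t ht => ?_
    obtain ⟨ht₀, ht₁⟩ := ht
    constructor <;>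
      nlinarith [min_le_left (A x) (B x), min_le_right (A x) (B x), le_max_left (A x) (B x),
        le_max_right (A x) (B x)]
  exact tendsto_of_tendsto_of_tendsto_of_le_of_le' (hbound (by simpa using hA.max hB))
    (hbound (by simpa using hA.min hB)) (hbetween.mono fun _ h => h.1)
    (hbetween.mono fun _ h => h.2)

/-- For `b > 0`, `I(b,c) → π/√b` as `c → 0`, and `∫₀¹ dt/√(t(1−t)) = π`. -/
theorem kdv_period_integral_limit (b : ℝ) (hb : 0 < b) :
    let y₀ : ℝ → ℝ := fun c => (-3 * b + Real.sqrt (9 * b^2 + 24 * c)) / 2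
    let y₁ : ℝ → ℝ := fun c => -(3 * b + Real.sqrt (9 * b^2 + 24 * c)) / 2
    let I : ℝ → ℝ := fun c => Real.sqrt 3 *
      ∫ t in Ioo (0:ℝ) 1, 1 / Real.sqrt (t * (1 - t) * (y₀ c * t - y₁ c))
    Tendsto I (nhdsWithin 0 {c : ℝ | c ≠ 0}) (nhds (Real.pi / Real.sqrt b)) ∧
    (∫ t in Ioo (0:ℝ) 1, 1 / Real.sqrt (t * (1 - t))) = Real.pi := by
  intro y₀ y₁ I
  refine ⟨?_, integral_one_div_sqrt_mul_one_sub⟩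
  set s : ℝ → ℝ := fun c => √(9 * b ^ 2 + 24 * c)
  have hweight : ∀ c t, y₀ c * t - y₁ c = (1 - t) * ((3 * b + s c) / 2) + t * s c := by
    intro c t
    simp only [y₀, y₁, s]
    ring
  have hs : Tendsto s (nhdsWithin 0 {c : ℝ | c ≠ 0}) (nhds (3 * b)) := by
    have hs0 : s 0 = 3 * b := by
      simp only [s, mul_zero, add_zero, show 9 * b ^ 2 = (3 * b) ^ 2 by ring]
      exact sqrt_sq (by positivity)
    exact hs0 ▸ (by fun_prop : Continuous s).continuousAt.tendsto.mono_left nhdsWithin_le_nhds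
  have hJ := tendsto_integral_one_div_sqrt_mul_one_sub_mul_affine (by positivity : 0 < 3 * b)
    (by simpa using (hs.const_add (3 * b)).div_const 2) hs
  have hconst : √3 * (π / √(3 * b)) = π / √b := by
    rw [sqrt_mul zero_le_three]
    field_simp
  simp only [I, hweight]
  exact hconst ▸ hJ.const_mul √3
end

section
/- For b > 0, the function I(b,c) = √6 ∫₀¹ dt / √( t(1−t)(6b − y₀(c)²(1 + t + t²)) ) defined for c ∈ (0, (√2/3) b^{3/2}), where y₀(c) is the positive root of y³ − 6by + 12c in (0, √(2b)), is strictly increasing in c, satisfies lim_{c→0⁺} I(b,c) = π/√b, and I(b,c) → +∞ as c → (√2/3) b^{3/2}. Consequently there exists c with I(b,c) = 1 if and only if b > π², and such c is unique. -/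
open Set MeasureTheory Filter

lemma meas_g (a₀ a₁ a₂ a₃ : ℝ) :
    Measurable (fun t : ℝ => 1 / Real.sqrt (t * (1 - t) * (a₀ + a₁*t + a₂*t^2 + a₃*t^3))) := by
  have h : Continuous fun t : ℝ => Real.sqrt (t * (1 - t) * (a₀ + a₁*t + a₂*t^2 + a₃*t^3)) := by
    fun_prop
  exact measurable_const.div h.measurable

lemma meas_base : Measurable (fun t : ℝ => 1 / Real.sqrt (t * (1 - t))) := by
  have h : Continuous fun t : ℝ => Real.sqrt (t * (1 - t)) := by fun_prop
  exact measurable_const.div h.measurable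

lemma integrableOn_base :
    IntegrableOn (fun t : ℝ => 1 / Real.sqrt (t * (1 - t))) (Ioo 0 1) := by
  have h1 : IntegrableOn (fun t : ℝ => 1 / Real.sqrt (t * (1 - t))) (Ioc 0 (1/2)) := by
    have hbig : IntegrableOn (fun t : ℝ => Real.sqrt 2 * t ^ (-(1/2) : ℝ)) (Ioc 0 (1/2)) := by
      have := (intervalIntegral.intervalIntegrable_rpow' (a := 0) (b := 1/2)
        (r := -(1/2)) (by norm_num))
      rw [intervalIntegrable_iff_integrableOn_Ioc_of_le (by norm_num)] at this
      exact this.const_mul _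
    refine hbig.integrable.mono meas_base.aestronglyMeasurable ?_
    filter_upwards [ae_restrict_mem measurableSet_Ioc] with t ht
    have ht0 : (0:ℝ) < t := ht.1
    have ht2 : t ≤ 1/2 := ht.2
    rw [Real.norm_eq_abs, Real.norm_eq_abs, abs_of_nonneg (by positivity),
      abs_of_nonneg (by positivity), Real.rpow_neg ht0.le, div_eq_mul_inv, one_mul,
      ← Real.sqrt_eq_rpow]
    have h2 : Real.sqrt t / Real.sqrt 2 ≤ Real.sqrt (t*(1-t)) := by
      rw [← Real.sqrt_div ht0.le]
      exact Real.sqrt_le_sqrt (by nlinarith)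
    calc (Real.sqrt (t*(1-t)))⁻¹ ≤ (Real.sqrt t / Real.sqrt 2)⁻¹ := by
          apply inv_anti₀ (by positivity) h2
      _ = Real.sqrt 2 * (Real.sqrt t)⁻¹ := by rw [inv_div, div_eq_mul_inv]
  have h2 : IntegrableOn (fun t : ℝ => 1 / Real.sqrt (t * (1 - t))) (Ico (1/2) 1) := by
    have hbig : IntegrableOn (fun t : ℝ => Real.sqrt 2 * (1-t) ^ (-(1/2) : ℝ)) (Ico (1/2) 1) := by
      have h0 := (intervalIntegral.intervalIntegrable_rpow' (a := 0) (b := 1/2)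
        (r := -(1/2)) (by norm_num))
      have h1 := h0.comp_sub_left 1
      rw [show (1:ℝ) - 1/2 = 1/2 by norm_num, show (1:ℝ) - 0 = 1 by norm_num] at h1
      replace h1 := h1.symm
      rw [intervalIntegrable_iff_integrableOn_Ioc_of_le (by norm_num)] at h1
      have : IntegrableOn (fun t : ℝ => (1-t) ^ (-(1/2) : ℝ)) (Ico (1/2) 1) := by
        rw [integrableOn_Ico_iff_integrableOn_Ioo]
        exact h1.mono_set Ioo_subset_Ioc_self
      exact this.const_mul _
    refine hbig.integrable.mono meas_base.aestronglyMeasurable ?_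
    filter_upwards [ae_restrict_mem measurableSet_Ico] with t ht
    have ht0 : (1:ℝ)/2 ≤ t := ht.1
    have ht2 : t < 1 := ht.2
    have h1t : (0:ℝ) < 1 - t := by linarith
    rw [Real.norm_eq_abs, Real.norm_eq_abs, abs_of_nonneg (by positivity),
      abs_of_nonneg (by positivity), Real.rpow_neg h1t.le, div_eq_mul_inv, one_mul,
      ← Real.sqrt_eq_rpow]
    have h2 : Real.sqrt (1-t) / Real.sqrt 2 ≤ Real.sqrt (t*(1-t)) := by
      rw [← Real.sqrt_div h1t.le]
      exact Real.sqrt_le_sqrt (by nlinarith)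
    calc (Real.sqrt (t*(1-t)))⁻¹ ≤ (Real.sqrt (1-t) / Real.sqrt 2)⁻¹ := by
          apply inv_anti₀ (by positivity) h2
      _ = Real.sqrt 2 * (Real.sqrt (1-t))⁻¹ := by rw [inv_div, div_eq_mul_inv]
  exact ((h1.union h2).mono_set (by
    intro t ht
    rcases le_or_gt t (1/2) with h | h
    · exact Or.inl ⟨ht.1, h⟩
    · exact Or.inr ⟨h.le, ht.2⟩))

lemma integral_base : ∫ t in Ioo (0:ℝ) 1, 1 / Real.sqrt (t * (1 - t)) = Real.pi := by
  have hii : IntervalIntegrable (fun t : ℝ => 1 / Real.sqrt (t * (1 - t))) volume 0 1 := by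
    rw [intervalIntegrable_iff_integrableOn_Ioc_of_le zero_le_one,
      integrableOn_Ioc_iff_integrableOn_Ioo]
    exact integrableOn_base
  have key : ∫ t in (0:ℝ)..1, 1 / Real.sqrt (t * (1 - t))
      = (fun u : ℝ => Real.arcsin (2*u - 1)) 1 - (fun u : ℝ => Real.arcsin (2*u - 1)) 0 := by
    apply intervalIntegral.integral_eq_sub_of_hasDeriv_right_of_le zero_le_one
      (f := fun u : ℝ => Real.arcsin (2*u - 1))
    · exact (Real.continuous_arcsin.comp (by continuity)).continuousOn
    · intro t ht
      have h1 : (2*t - 1 : ℝ) ≠ -1 := by intro h; have := ht.1; nlinarith [ht.1]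
      have h2 : (2*t - 1 : ℝ) ≠ 1 := by intro h; nlinarith [ht.2]
      have hc : HasDerivAt (fun t : ℝ => 2*t - 1) 2 t := by
        simpa using ((hasDerivAt_id t).const_mul 2).sub_const 1
      have hd := (Real.hasDerivAt_arcsin h1 h2).comp t hc
      have heq : (1 / Real.sqrt (1 - (2*t-1)^2)) * 2 = 1 / Real.sqrt (t * (1 - t)) := by
        have h4 : (1 : ℝ) - (2*t-1)^2 = 4 * (t * (1-t)) := by ring
        rw [h4, show (4:ℝ) * (t * (1-t)) = 2^2 * (t*(1-t)) by ring,
          Real.sqrt_mul (by positivity), Real.sqrt_sq (by norm_num)]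
        rw [div_mul_eq_mul_div, one_mul]
        have hpos : (0:ℝ) < Real.sqrt (t * (1 - t)) := by
          have h5 := ht.1; have h6 := ht.2
          apply Real.sqrt_pos.2; nlinarith
        rw [eq_div_iff hpos.ne']
        field_simp
      rw [heq] at hd
      exact hd.hasDerivWithinAt
    · exact hii
  rw [intervalIntegral.integral_of_le zero_le_one, integral_Ioc_eq_integral_Ioo] at key
  rw [key]
  norm_num [Real.arcsin_one, Real.arcsin_neg_one]

noncomputable def mkdvG (b s t : ℝ) : ℝ := 1 / Real.sqrt (t * (1 - t) * (6 * b - s * (1 + t + t^2)))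

noncomputable def mkdvJ (b s : ℝ) : ℝ := ∫ t in Ioo (0:ℝ) 1, mkdvG b s t

lemma meas_mkdvG (b s : ℝ) : Measurable (mkdvG b s) := by
  have h : Continuous fun t : ℝ => Real.sqrt (t * (1 - t) * (6 * b - s * (1 + t + t^2))) := by
    fun_prop
  exact measurable_const.div h.measurable

lemma quad_pos {b s t : ℝ} (hb : 0 < b) (hs : 0 ≤ s) (hs2 : s < 2*b) (ht : t ∈ Ioo (0:ℝ) 1) :
    0 < 6 * b - s * (1 + t + t^2) := by
  have h1 : 0 ≤ s * ((1 - t) * (2 + t)) :=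
    mul_nonneg hs (mul_nonneg (by linarith [ht.2]) (by linarith [ht.1]))
  nlinarith

lemma inner_pos {b s t : ℝ} (hb : 0 < b) (hs : 0 ≤ s) (hs2 : s < 2*b) (ht : t ∈ Ioo (0:ℝ) 1) :
    0 < t * (1 - t) * (6 * b - s * (1 + t + t^2)) := by
  have h0 := quad_pos hb hs hs2 ht
  have h1 := ht.1; have h2 := ht.2
  have h3 : (0:ℝ) < 1 - t := by linarith
  positivity

lemma mkdvG_pos {b s t : ℝ} (hb : 0 < b) (hs : 0 ≤ s) (hs2 : s < 2*b) (ht : t ∈ Ioo (0:ℝ) 1) :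
    0 < mkdvG b s t := by
  unfold mkdvG
  have h := inner_pos hb hs hs2 ht
  positivity

lemma mkdvG_mono {b s₁ s₂ t : ℝ} (hb : 0 < b) (hs : 0 ≤ s₁) (h12 : s₁ ≤ s₂) (hs2 : s₂ < 2*b)
    (ht : t ∈ Ioo (0:ℝ) 1) : mkdvG b s₁ t ≤ mkdvG b s₂ t := by
  unfold mkdvG
  have h2 := inner_pos hb (hs.trans h12) hs2 ht
  apply one_div_le_one_div_of_le (Real.sqrt_pos.2 h2)
  apply Real.sqrt_le_sqrt
  have h1 : (0:ℝ) ≤ 1 + t + t^2 := by nlinarith [ht.1]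
  nlinarith [ht.1, ht.2, mul_le_mul_of_nonneg_right h12 h1,
    mul_nonneg (mul_nonneg ht.1.le (by linarith [ht.2] : (0:ℝ) ≤ 1 - t)) h1]

lemma mkdvG_strict_mono {b s₁ s₂ t : ℝ} (hb : 0 < b) (hs : 0 ≤ s₁) (h12 : s₁ < s₂)
    (hs2 : s₂ < 2*b) (ht : t ∈ Ioo (0:ℝ) 1) : mkdvG b s₁ t < mkdvG b s₂ t := by
  unfold mkdvG
  have h2 := inner_pos hb (hs.trans h12.le) hs2 ht
  apply one_div_lt_one_div_of_lt (Real.sqrt_pos.2 h2)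
  apply Real.sqrt_lt_sqrt h2.le
  have h1 : (0:ℝ) < 1 + t + t^2 := by nlinarith [ht.1]
  have h3 : (0:ℝ) < t * (1-t) := mul_pos ht.1 (by linarith [ht.2])
  nlinarith [mul_lt_mul_of_pos_right h12 h1]

lemma mkdvG_le_bound {b s t : ℝ} (hb : 0 < b) (hs : 0 ≤ s) (hs2 : s < 2*b)
    (ht : t ∈ Ioo (0:ℝ) 1) :
    mkdvG b s t ≤ (1 / Real.sqrt (6*b - 3*s)) * (1 / Real.sqrt (t * (1 - t))) := by
  unfold mkdvG
  have h3 : (0:ℝ) < t * (1-t) := mul_pos ht.1 (by linarith [ht.2])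
  have hc : (0:ℝ) < 6*b - 3*s := by linarith
  rw [div_mul_div_comm, one_mul, ← Real.sqrt_mul hc.le]
  apply one_div_le_one_div_of_le (by positivity)
  apply Real.sqrt_le_sqrt
  have h1 : (0:ℝ) ≤ 1 + t + t^2 := by nlinarith [ht.1]
  nlinarith [mul_nonneg h3.le (mul_nonneg hs (by nlinarith [ht.1, ht.2] : (0:ℝ) ≤ 3 - (1+t+t^2)))]

lemma integrableOn_mkdvG {b s : ℝ} (hb : 0 < b) (hs : 0 ≤ s) (hs2 : s < 2*b) :
    IntegrableOn (mkdvG b s) (Ioo 0 1) := by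
  have hbig : IntegrableOn
      (fun t : ℝ => (1 / Real.sqrt (6*b - 3*s)) * (1 / Real.sqrt (t * (1 - t)))) (Ioo 0 1) :=
    integrableOn_base.const_mul _
  refine hbig.integrable.mono (meas_mkdvG b s).aestronglyMeasurable ?_
  filter_upwards [ae_restrict_mem measurableSet_Ioo] with t ht
  rw [Real.norm_eq_abs, Real.norm_eq_abs, abs_of_nonneg (mkdvG_pos hb hs hs2 ht).le,
    abs_of_nonneg (by positivity)]
  exact mkdvG_le_bound hb hs hs2 ht

lemma mkdvJ_strict_mono {b s₁ s₂ : ℝ} (hb : 0 < b) (hs : 0 ≤ s₁) (h12 : s₁ < s₂)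
    (hs2 : s₂ < 2*b) : mkdvJ b s₁ < mkdvJ b s₂ := by
  have hi1 := integrableOn_mkdvG hb hs (h12.trans hs2)
  have hi2 := integrableOn_mkdvG hb (hs.trans h12.le) hs2
  have hsub : 0 < ∫ t in Ioo (0:ℝ) 1, (mkdvG b s₂ t - mkdvG b s₁ t) := by
    rw [setIntegral_pos_iff_support_of_nonneg_ae]
    · rw [show (Function.support fun t => mkdvG b s₂ t - mkdvG b s₁ t) ∩ Ioo 0 1
          = Ioo 0 1 from ?_]
      · simp [Real.volume_Ioo]
      · refine inter_eq_right.2 fun t ht => ?_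
        exact sub_ne_zero.2 (mkdvG_strict_mono hb hs h12 hs2 ht).ne'
    · filter_upwards [ae_restrict_mem measurableSet_Ioo] with t ht
      exact sub_nonneg.2 (mkdvG_mono hb hs h12.le hs2 ht)
    · exact hi2.sub hi1
  have := integral_sub hi2.integrable hi1.integrable
  unfold mkdvJ
  rw [this] at hsub
  linarith

lemma mkdvJ_zero {b : ℝ} (hb : 0 < b) : mkdvJ b 0 = Real.pi / Real.sqrt (6*b) := by
  unfold mkdvJ
  have he : (fun t => mkdvG b 0 t)
      = fun t => (1 / Real.sqrt (6*b)) * (1 / Real.sqrt (t*(1-t))) := by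
    funext t
    unfold mkdvG
    rw [zero_mul, sub_zero, Real.sqrt_mul' _ (by positivity : (0:ℝ) ≤ 6*b)]
    rw [div_mul_div_comm, one_mul, mul_comm]
  rw [he, integral_const_mul, integral_base]
  ring

noncomputable def mkdvY (b c : ℝ) : ℝ := Real.sqrt (8 * b) *
  Real.cos (Real.pi / 3 + (1/3) * Real.arccos (3 * c / Real.sqrt (2 * b^3)))

lemma continuous_mkdvY (b : ℝ) : Continuous (mkdvY b) := by
  unfold mkdvY
  have h1 : Continuous fun c : ℝ => 3 * c / Real.sqrt (2 * b^3) := by fun_prop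
  exact continuous_const.mul (Real.continuous_cos.comp
    (continuous_const.add (continuous_const.mul (Real.continuous_arccos.comp h1))))

lemma sqrt2b3_eq {b : ℝ} (hb : 0 < b) :
    Real.sqrt (2 * b^3) = 3 * (Real.sqrt 2 / 3 * b ^ ((3:ℝ)/2)) := by
  have h1 : Real.sqrt (b^3) = b ^ ((3:ℝ)/2) := by
    rw [Real.sqrt_eq_rpow, ← Real.rpow_natCast b 3, ← Real.rpow_mul hb.le]
    norm_num
  rw [Real.sqrt_mul (by norm_num) (b^3), h1]
  ring

lemma mkdvY_strictMono {b : ℝ} (hb : 0 < b) :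
    StrictMonoOn (mkdvY b) (Icc 0 (Real.sqrt 2 / 3 * b ^ ((3:ℝ)/2))) := by
  set cmax := Real.sqrt 2 / 3 * b ^ ((3:ℝ)/2) with hcmax
  have hcm : (0:ℝ) < cmax := by positivity
  have hsq : (0:ℝ) < Real.sqrt (2 * b^3) := Real.sqrt_pos.2 (by positivity)
  intro c₁ h₁ c₂ h₂ h12
  unfold mkdvY
  set u₁ := 3 * c₁ / Real.sqrt (2 * b^3) with hu₁
  set u₂ := 3 * c₂ / Real.sqrt (2 * b^3) with hu₂
  have hu12 : u₁ < u₂ := by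
    rw [hu₁, hu₂, div_lt_div_iff_of_pos_right hsq]
    linarith
  have hu1l : (0:ℝ) ≤ u₁ := by
    rw [hu₁]; exact div_nonneg (by linarith [h₁.1]) hsq.le
  have hu2u : u₂ ≤ 1 := by
    rw [hu₂, div_le_one hsq, sqrt2b3_eq hb]
    linarith [h₂.2]
  have harc : Real.arccos u₂ < Real.arccos u₁ :=
    Real.strictAntiOn_arccos ⟨by linarith, by linarith⟩ ⟨by linarith, hu2u⟩ hu12
  have hθ : ∀ u : ℝ, Real.pi/3 + (1/3) * Real.arccos u ∈ Icc 0 Real.pi := by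
    intro u
    constructor
    · have := Real.arccos_nonneg u; have := Real.pi_pos; linarith
    · have := Real.arccos_le_pi u; have := Real.pi_pos; linarith
  have hcos : Real.cos (Real.pi/3 + (1/3) * Real.arccos u₁)
      < Real.cos (Real.pi/3 + (1/3) * Real.arccos u₂) := by
    apply Real.strictAntiOn_cos (hθ u₂) (hθ u₁)
    linarith
  exact mul_lt_mul_of_pos_left hcos (Real.sqrt_pos.2 (by positivity))

lemma mkdvY_zero {b : ℝ} (hb : 0 < b) : mkdvY b 0 = 0 := by
  unfold mkdvY
  rw [mul_zero, zero_div, Real.arccos_zero]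
  rw [show Real.pi/3 + 1/3 * (Real.pi/2) = Real.pi/2 by ring, Real.cos_pi_div_two, mul_zero]

lemma mkdvY_cmax {b : ℝ} (hb : 0 < b) :
    mkdvY b (Real.sqrt 2 / 3 * b ^ ((3:ℝ)/2)) = Real.sqrt (2*b) := by
  unfold mkdvY
  have hsq : (0:ℝ) < Real.sqrt (2 * b^3) := Real.sqrt_pos.2 (by positivity)
  rw [show 3 * (Real.sqrt 2 / 3 * b ^ ((3:ℝ)/2)) / Real.sqrt (2*b^3) = 1 by
    rw [← sqrt2b3_eq hb, div_self hsq.ne']]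
  rw [Real.arccos_one, mul_zero, add_zero, Real.cos_pi_div_three]
  rw [show (8:ℝ) * b = 2^2 * (2*b) by ring, Real.sqrt_mul (by positivity),
    Real.sqrt_sq (by norm_num)]
  ring

lemma mkdvY_nonneg {b c : ℝ} (hb : 0 < b)
    (hc : c ∈ Icc 0 (Real.sqrt 2 / 3 * b ^ ((3:ℝ)/2))) : 0 ≤ mkdvY b c := by
  rcases eq_or_lt_of_le hc.1 with h | h
  · rw [← h, mkdvY_zero hb]
  · have := mkdvY_strictMono hb (left_mem_Icc.2 (by positivity)) hc h
    rw [mkdvY_zero hb] at this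
    exact this.le

lemma mkdvY_mem {b c : ℝ} (hb : 0 < b)
    (hc : c ∈ Ioo 0 (Real.sqrt 2 / 3 * b ^ ((3:ℝ)/2))) :
    mkdvY b c ∈ Ioo 0 (Real.sqrt (2*b)) := by
  have hcm : (0:ℝ) < Real.sqrt 2 / 3 * b ^ ((3:ℝ)/2) := by positivity
  constructor
  · have := mkdvY_strictMono hb (left_mem_Icc.2 hcm.le) ⟨hc.1.le, hc.2.le⟩ hc.1
    rwa [mkdvY_zero hb] at this
  · have := mkdvY_strictMono hb ⟨hc.1.le, hc.2.le⟩ (right_mem_Icc.2 hcm.le) hc.2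
    rwa [mkdvY_cmax hb] at this

lemma mkdvSq_strictMono {b : ℝ} (hb : 0 < b) :
    StrictMonoOn (fun c => (mkdvY b c)^2) (Icc 0 (Real.sqrt 2 / 3 * b ^ ((3:ℝ)/2))) := by
  intro c₁ h₁ c₂ h₂ h12
  exact pow_lt_pow_left₀ (mkdvY_strictMono hb h₁ h₂ h12) (mkdvY_nonneg hb h₁) (by norm_num)

lemma mkdvSq_lt {b c : ℝ} (hb : 0 < b)
    (hc : c ∈ Ioo 0 (Real.sqrt 2 / 3 * b ^ ((3:ℝ)/2))) : (mkdvY b c)^2 < 2*b := by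
  have h := mkdvY_mem hb hc
  have h2 : (mkdvY b c)^2 < (Real.sqrt (2*b))^2 :=
    pow_lt_pow_left₀ h.2 h.1.le (by norm_num)
  rwa [Real.sq_sqrt (by positivity)] at h2

lemma mkdvJ_tendsto {b s₀ s₁ : ℝ} (hb : 0 < b) {l : Filter ℝ} [l.NeBot] [l.IsCountablyGenerated]
    {σ : ℝ → ℝ} (hσ : Tendsto σ l (nhds s₀)) (hs₀ : 0 ≤ s₀) (hs₁ : s₁ < 2*b)
    (hev : ∀ᶠ c in l, 0 ≤ σ c ∧ σ c ≤ s₁) :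
    Tendsto (fun c => mkdvJ b (σ c)) l (nhds (mkdvJ b s₀)) := by
  have hs₁0 : 0 ≤ s₁ := by
    rcases hev.exists with ⟨c, hc1, hc2⟩; linarith
  have hs₀2 : s₀ < 2*b := by
    have : s₀ ≤ s₁ := le_of_tendsto hσ (hev.mono fun c hc => hc.2)
    linarith
  unfold mkdvJ
  apply tendsto_integral_filter_of_dominated_convergence
    (fun t => (1 / Real.sqrt (6*b - 3*s₁)) * (1 / Real.sqrt (t * (1 - t))))
  · exact Eventually.of_forall fun c => (meas_mkdvG b (σ c)).aestronglyMeasurable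
  · filter_upwards [hev] with c hc
    filter_upwards [ae_restrict_mem measurableSet_Ioo] with t ht
    rw [Real.norm_eq_abs, abs_of_nonneg (mkdvG_pos hb hc.1 (lt_of_le_of_lt hc.2 hs₁) ht).le]
    calc mkdvG b (σ c) t ≤ (1 / Real.sqrt (6*b - 3*(σ c))) * (1 / Real.sqrt (t * (1 - t))) :=
          mkdvG_le_bound hb hc.1 (lt_of_le_of_lt hc.2 hs₁) ht
      _ ≤ (1 / Real.sqrt (6*b - 3*s₁)) * (1 / Real.sqrt (t * (1 - t))) := by
          have h1 : (0:ℝ) < 6*b - 3*s₁ := by linarith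
          have h2 : Real.sqrt (6*b - 3*s₁) ≤ Real.sqrt (6*b - 3*(σ c)) :=
            Real.sqrt_le_sqrt (by linarith [hc.2])
          have h3 : (0:ℝ) ≤ 1 / Real.sqrt (t * (1 - t)) := by positivity
          exact mul_le_mul_of_nonneg_right
            (one_div_le_one_div_of_le (Real.sqrt_pos.2 h1) h2) h3
  · exact integrableOn_base.const_mul _
  · filter_upwards [ae_restrict_mem measurableSet_Ioo] with t ht
    have hct : ContinuousAt (fun s => mkdvG b s t) s₀ := by
      unfold mkdvG
      have hin : (0:ℝ) < t * (1 - t) * (6 * b - s₀ * (1 + t + t^2)) :=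
        inner_pos hb hs₀ hs₀2 ht
      have hcont : ContinuousAt
          (fun s : ℝ => Real.sqrt (t * (1 - t) * (6 * b - s * (1 + t + t^2)))) s₀ :=
        Real.continuous_sqrt.continuousAt.comp (by fun_prop)
      exact ContinuousAt.div continuousAt_const hcont (Real.sqrt_pos.2 hin).ne'
    exact hct.tendsto.comp hσ

lemma mkdvJ_unbounded {b : ℝ} (hb : 0 < b) (M : ℝ) :
    ∃ s, 0 ≤ s ∧ s < 2*b ∧ M < mkdvJ b s := by
  set A := Real.sqrt (1 + 6*b) with hA
  have hA1 : 1 ≤ A := by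
    rw [hA]
    rw [show (1:ℝ) + 6*b = 1 * (1+6*b) by ring]
    exact Real.one_le_sqrt.mpr (by linarith)
  have hApos : 0 < A := by linarith
  set ε := min (min (1/2) (3*b)) (Real.exp (-((M+1)*A))) with hε
  have hε0 : 0 < ε := lt_min (lt_min (by norm_num) (by linarith)) (Real.exp_pos _)
  have hεh : ε ≤ 1/2 := le_trans (min_le_left _ _) (min_le_left _ _)
  have hεb : ε ≤ 3*b := le_trans (min_le_left _ _) (min_le_right _ _)
  have hεe : ε ≤ Real.exp (-((M+1)*A)) := min_le_right _ _
  set s := 2*b - ε/3 with hs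
  have hs0 : 0 ≤ s := by rw [hs]; linarith
  have hs2 : s < 2*b := by rw [hs]; linarith
  refine ⟨s, hs0, hs2, ?_⟩
  have hle1 : (1:ℝ) - ε < 1 := by linarith
  have hle0 : (0:ℝ) < 1 - ε := by linarith
  -- pointwise lower bound on Ioo 0 (1-ε)
  have hpt : ∀ t ∈ Ioo (0:ℝ) (1-ε), (1/A) * (1/(1-t)) ≤ mkdvG b s t := by
    intro t ht
    have ht1 : t ∈ Ioo (0:ℝ) 1 := ⟨ht.1, lt_trans ht.2 hle1⟩
    have htε : 1 - t > ε := by linarith [ht.2]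
    have hX : (0:ℝ) < t * (1 - t) * (6 * b - s * (1 + t + t^2)) := inner_pos hb hs0 hs2 ht1
    have hkey : t * (1 - t) * (6 * b - s * (1 + t + t^2)) ≤ (1+6*b) * (1-t)^2 := by
      have h1 : 6 * b - s * (1 + t + t^2) = ε + s * ((1-t)*(2+t)) := by rw [hs]; ring
      have h2 : s * ((1-t)*(2+t)) ≤ 6*b*(1-t) := by
        have : s * (2+t) ≤ 6*b := by nlinarith [ht1.1, ht1.2]
        nlinarith [ht1.2, ht1.1]
      have h3 : 6 * b - s * (1 + t + t^2) ≤ (1+6*b)*(1-t) := by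
        rw [h1]; nlinarith
      have hE : (0:ℝ) < 6 * b - s * (1 + t + t^2) := quad_pos hb hs0 hs2 ht1
      have hf1 : t * (1-t) * (6 * b - s * (1 + t + t^2)) ≤ t * (1-t) * ((1+6*b)*(1-t)) :=
        mul_le_mul_of_nonneg_left h3 (mul_nonneg ht1.1.le (by linarith [ht1.2]))
      nlinarith [ht1.1, ht1.2, mul_nonneg (mul_nonneg (by linarith : (0:ℝ) ≤ 1+6*b)
        (by linarith [ht1.2] : (0:ℝ) ≤ 1-t)) (by linarith [ht1.2] : (0:ℝ) ≤ 1-t)]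
    have hsqle : Real.sqrt (t * (1 - t) * (6 * b - s * (1 + t + t^2))) ≤ A * (1-t) := by
      calc Real.sqrt (t * (1 - t) * (6 * b - s * (1 + t + t^2)))
          ≤ Real.sqrt ((1+6*b) * (1-t)^2) := Real.sqrt_le_sqrt hkey
        _ = A * (1-t) := by
            rw [Real.sqrt_mul (by linarith), Real.sqrt_sq (by linarith [ht.2])]
    unfold mkdvG
    rw [show (1/A) * (1/(1-t)) = 1/(A*(1-t)) by
      rw [div_mul_div_comm, one_mul]]
    exact one_div_le_one_div_of_le (Real.sqrt_pos.2 hX) hsqle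
  -- integral of the lower bound
  have hlower_int : IntegrableOn (fun t : ℝ => (1/A) * (1/(1-t))) (Ioo 0 (1-ε)) := by
    apply (ContinuousOn.integrableOn_Icc ?_).mono_set (Ioo_subset_Icc_self)
    intro t ht
    have h1t : (1:ℝ) - t ≠ 0 := by
      have h4 := ht.2
      have : ε ≤ 1 - t := by linarith
      intro h; rw [h] at this; linarith
    exact (continuousAt_const.mul (continuousAt_const.div (by fun_prop) h1t)).continuousWithinAt
  have hg_int : IntegrableOn (mkdvG b s) (Ioo 0 1) := integrableOn_mkdvG hb hs0 hs2
  have h1 : ∫ t in Ioo (0:ℝ) (1-ε), (1/A) * (1/(1-t)) ∂volume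
      ≤ ∫ t in Ioo (0:ℝ) (1-ε), mkdvG b s t ∂volume := by
    apply setIntegral_mono_on hlower_int
      (hg_int.mono_set (Ioo_subset_Ioo le_rfl hle1.le)) measurableSet_Ioo hpt
  have h2 : ∫ t in Ioo (0:ℝ) (1-ε), mkdvG b s t ∂volume ≤ mkdvJ b s := by
    unfold mkdvJ
    apply setIntegral_mono_set hg_int
    · filter_upwards [ae_restrict_mem measurableSet_Ioo] with t ht
      exact (mkdvG_pos hb hs0 hs2 ht).le
    · exact HasSubset.Subset.eventuallyLE (Ioo_subset_Ioo le_rfl hle1.le)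
  -- compute the lower integral
  have hval : ∫ t in Ioo (0:ℝ) (1-ε), (1/A) * (1/(1-t)) ∂volume = (1/A) * Real.log (1/ε) := by
    rw [← integral_Ioc_eq_integral_Ioo, ← intervalIntegral.integral_of_le hle0.le]
    rw [intervalIntegral.integral_const_mul]
    congr 1
    have := intervalIntegral.integral_comp_sub_left (a := 0) (b := 1-ε) (fun u : ℝ => 1/u) 1
    simp only [sub_zero, sub_sub_cancel] at this
    rw [this, integral_one_div (by
      intro h
      rcases (mem_uIcc.1 h) with ⟨h1, _⟩ | ⟨_, h2⟩
      · linarith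
      · linarith)]
  have hlog : (M+1) * A ≤ Real.log (1/ε) := by
    have h3 : Real.exp ((M+1)*A) ≤ 1/ε := by
      rw [le_one_div (Real.exp_pos _) hε0]
      calc ε ≤ Real.exp (-((M+1)*A)) := hεe
        _ = (Real.exp ((M+1)*A))⁻¹ := Real.exp_neg _
        _ = 1 / Real.exp ((M+1)*A) := (one_div _).symm
    calc (M+1)*A = Real.log (Real.exp ((M+1)*A)) := (Real.log_exp _).symm
      _ ≤ Real.log (1/ε) := Real.log_le_log (Real.exp_pos _) h3
  have : M + 1 ≤ (1/A) * Real.log (1/ε) := by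
    rw [one_div, inv_mul_eq_div, le_div_iff₀ hApos]
    exact hlog
  linarith [h1, h2, hval ▸ this]

/-- For `b > 0`, the period integral `I(b,c)` for the defocusing mKdV is strictly
increasing in `c` on `(0, (√2/3)b^{3/2})`, tends to `π/√b` as `c → 0⁺` and to `+∞` as
`c → ((√2/3)b^{3/2})⁻`; consequently `I(b,c) = 1` has a solution iff `b > π²`, and
such a solution is unique. -/
theorem mkdv_defocusing_period_integral (b : ℝ) (hb : 0 < b) :
    let cmax := Real.sqrt 2 / 3 * b ^ ((3:ℝ)/2)
    let y₀ : ℝ → ℝ := fun c => Real.sqrt (8 * b) *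
      Real.cos (Real.pi / 3 + (1/3) * Real.arccos (3 * c / Real.sqrt (2 * b^3)))
    let I : ℝ → ℝ := fun c => Real.sqrt 6 *
      ∫ t in Ioo (0:ℝ) 1,
        1 / Real.sqrt (t * (1 - t) * (6 * b - (y₀ c)^2 * (1 + t + t^2)))
    StrictMonoOn I (Ioo 0 cmax) ∧
    Tendsto I (nhdsWithin 0 (Ioi 0)) (nhds (Real.pi / Real.sqrt b)) ∧
    Tendsto I (nhdsWithin cmax (Iio cmax)) atTop ∧
    ((∃ c ∈ Ioo (0:ℝ) cmax, I c = 1) ↔ Real.pi^2 < b) ∧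
    (∀ c₁ ∈ Ioo (0:ℝ) cmax, ∀ c₂ ∈ Ioo (0:ℝ) cmax, I c₁ = 1 → I c₂ = 1 → c₁ = c₂) := by
  intro cmax y₀ I
  have hcmd : cmax = Real.sqrt 2 / 3 * b ^ ((3:ℝ)/2) := rfl
  have hcm : (0:ℝ) < cmax := by rw [hcmd]; positivity
  have hI : ∀ c, I c = Real.sqrt 6 * mkdvJ b ((mkdvY b c)^2) := fun c => rfl
  have h6 : (0:ℝ) < Real.sqrt 6 := by positivity
  have h6one : (1:ℝ) ≤ Real.sqrt 6 := by
    rw [show (6:ℝ) = 1 * 6 by ring]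
    exact Real.one_le_sqrt.mpr (by norm_num)
  -- strict monotonicity
  have hmono : StrictMonoOn I (Ioo 0 cmax) := by
    intro c₁ h₁ c₂ h₂ h12
    rw [hI, hI]
    have hlt : (mkdvY b c₁)^2 < (mkdvY b c₂)^2 := by
      rw [hcmd] at h₁ h₂
      exact mkdvSq_strictMono hb ⟨h₁.1.le, h₁.2.le⟩ ⟨h₂.1.le, h₂.2.le⟩ h12
    have h2b : (mkdvY b c₂)^2 < 2*b := mkdvSq_lt hb (hcmd ▸ h₂)
    exact mul_lt_mul_of_pos_left (mkdvJ_strict_mono hb (sq_nonneg _) hlt h2b) h6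
  -- limit at 0⁺
  have hsqcont : Continuous fun c => (mkdvY b c)^2 := (continuous_mkdvY b).pow 2
  have h2 : Tendsto I (nhdsWithin 0 (Ioi 0)) (nhds (Real.pi / Real.sqrt b)) := by
    have hσ : Tendsto (fun c => (mkdvY b c)^2) (nhdsWithin 0 (Ioi 0)) (nhds 0) := by
      have h0 : (mkdvY b 0)^2 = 0 := by rw [mkdvY_zero hb]; ring
      have := (hsqcont.tendsto 0).mono_left (nhdsWithin_le_nhds (s := Ioi (0:ℝ)))
      rwa [h0] at this
    have hev : ∀ᶠ c in nhdsWithin 0 (Ioi 0), 0 ≤ (mkdvY b c)^2 ∧ (mkdvY b c)^2 ≤ b := by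
      filter_upwards [hσ (Iio_mem_nhds hb)] with c hc
      exact ⟨sq_nonneg _, le_of_lt hc⟩
    have hJ := mkdvJ_tendsto hb hσ le_rfl (show b < 2*b by linarith) hev
    have := hJ.const_mul (Real.sqrt 6)
    have hval : Real.sqrt 6 * mkdvJ b 0 = Real.pi / Real.sqrt b := by
      rw [mkdvJ_zero hb, Real.sqrt_mul (by norm_num : (0:ℝ) ≤ 6) b]
      have hb6 : Real.sqrt 6 ≠ 0 := h6.ne'
      have hbb : Real.sqrt b ≠ 0 := (Real.sqrt_pos.2 hb).ne'
      field_simp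
    rw [hval] at this
    exact this.congr fun c => (hI c).symm
  -- continuity on Ioo
  have hcont : ContinuousOn I (Ioo 0 cmax) := by
    intro c₀ hc₀
    apply ContinuousAt.continuousWithinAt
    set c' := (c₀ + cmax)/2 with hc'
    have hc'mem : c' ∈ Ioo 0 cmax := ⟨by have := hc₀.1; rw [hc']; linarith,
      by have := hc₀.2; rw [hc']; linarith⟩
    have hσ : Tendsto (fun c => (mkdvY b c)^2) (nhds c₀) (nhds ((mkdvY b c₀)^2)) :=
      hsqcont.tendsto c₀
    have hs₁ : (mkdvY b c')^2 < 2*b := mkdvSq_lt hb (hcmd ▸ hc'mem)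
    have hev : ∀ᶠ c in nhds c₀, 0 ≤ (mkdvY b c)^2 ∧ (mkdvY b c)^2 ≤ (mkdvY b c')^2 := by
      filter_upwards [IsOpen.mem_nhds isOpen_Ioo
        (show c₀ ∈ Ioo 0 c' from ⟨hc₀.1, by rw [hc']; have := hc₀.2; linarith⟩)] with c hc
      refine ⟨sq_nonneg _, ?_⟩
      exact (mkdvSq_strictMono hb).monotoneOn
        ⟨hc.1.le, by rw [hcmd] at *; have := hc.2; have := hc'mem.2; linarith⟩
        ⟨by rw [hcmd] at *; have := hc'mem.1; linarith, hcmd ▸ hc'mem.2.le⟩ hc.2.le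
    have hJ := mkdvJ_tendsto hb hσ (sq_nonneg _) hs₁ hev
    have := hJ.const_mul (Real.sqrt 6)
    exact (this.congr fun c => (hI c).symm : ContinuousAt I c₀)
  -- tendsto atTop at cmax⁻
  have h3 : Tendsto I (nhdsWithin cmax (Iio cmax)) atTop := by
    rw [tendsto_atTop]
    intro M
    obtain ⟨s, hs0, hs2, hsM⟩ := mkdvJ_unbounded hb (max M 0)
    have hsq_t : Tendsto (fun c => (mkdvY b c)^2) (nhdsWithin cmax (Iio cmax)) (nhds (2*b)) := by
      have h0 : (mkdvY b cmax)^2 = 2*b := by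
        rw [hcmd, mkdvY_cmax hb, Real.sq_sqrt (by linarith)]
      have := (hsqcont.tendsto cmax).mono_left (nhdsWithin_le_nhds (s := Iio cmax))
      rwa [h0] at this
    have hev1 : ∀ᶠ c in nhdsWithin cmax (Iio cmax), s < (mkdvY b c)^2 :=
      hsq_t (Ioi_mem_nhds hs2)
    have hev2 : ∀ᶠ c in nhdsWithin cmax (Iio cmax), c ∈ Ioo 0 cmax := by
      rw [eventually_nhdsWithin_iff]
      filter_upwards [Ioi_mem_nhds (show (0:ℝ) < cmax from hcm)] with c hc hc'
      exact ⟨hc, hc'⟩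
    filter_upwards [hev1.and hev2] with c hc
    rw [hI]
    have hsqc2b : (mkdvY b c)^2 < 2*b := mkdvSq_lt hb (hcmd ▸ hc.2)
    have hJlt : mkdvJ b s < mkdvJ b ((mkdvY b c)^2) :=
      mkdvJ_strict_mono hb hs0 hc.1 hsqc2b
    have hlt : max M 0 < mkdvJ b ((mkdvY b c)^2) := lt_trans hsM hJlt
    calc M ≤ max M 0 := le_max_left _ _
      _ ≤ Real.sqrt 6 * max M 0 := le_mul_of_one_le_left (le_max_right _ _) h6one
      _ ≤ Real.sqrt 6 * mkdvJ b ((mkdvY b c)^2) :=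
          mul_le_mul_of_nonneg_left hlt.le h6.le
  -- the iff
  have hiff : (∃ c ∈ Ioo (0:ℝ) cmax, I c = 1) ↔ Real.pi^2 < b := by
    constructor
    · rintro ⟨c, hc, hc1⟩
      set c' := c/2 with hc'
      have hc'mem : c' ∈ Ioo 0 cmax := ⟨by have := hc.1; rw [hc']; linarith,
        by have := hc.1; have := hc.2; rw [hc']; linarith⟩
      have hle : Real.pi / Real.sqrt b ≤ I c' := by
        apply le_of_tendsto h2
        rw [eventually_nhdsWithin_iff]
        filter_upwards [Iio_mem_nhds hc'mem.1] with x hx hx'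
        exact (hmono ⟨hx', lt_trans hx hc'mem.2⟩ hc'mem hx).le
      have hlt1 : Real.pi / Real.sqrt b < 1 := by
        have := hmono hc'mem hc (by rw [hc']; have := hc.1; linarith)
        rw [hc1] at this
        linarith
      have hπb : Real.pi < Real.sqrt b := by
        rwa [div_lt_one (Real.sqrt_pos.2 hb)] at hlt1
      calc Real.pi^2 < (Real.sqrt b)^2 :=
            pow_lt_pow_left₀ hπb Real.pi_pos.le (by norm_num)
        _ = b := Real.sq_sqrt hb.le
    · intro hπ
      have hπb : Real.pi < Real.sqrt b := by
        have := Real.sqrt_lt_sqrt (sq_nonneg Real.pi) hπ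
        rwa [Real.sqrt_sq Real.pi_pos.le] at this
      have hlt1 : Real.pi / Real.sqrt b < 1 := by
        rw [div_lt_one (Real.sqrt_pos.2 hb)]; exact hπb
      -- find c₁ with I c₁ < 1
      have hev1 : ∀ᶠ c in nhdsWithin 0 (Ioi 0), I c < 1 ∧ c ∈ Ioo 0 cmax := by
        refine Filter.Eventually.and (h2 (Iio_mem_nhds hlt1) : ∀ᶠ c in nhdsWithin 0 (Ioi 0), I c < 1) ?_
        rw [eventually_nhdsWithin_iff]
        filter_upwards [Iio_mem_nhds hcm] with x hx hx'
        exact ⟨hx', hx⟩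
      obtain ⟨c₁, hc₁lt, hc₁mem⟩ := hev1.exists
      -- find c₂ with I c₂ > 1
      have hev2 : ∀ᶠ c in nhdsWithin cmax (Iio cmax), 1 < I c ∧ c ∈ Ioo 0 cmax := by
        refine Filter.Eventually.and (h3 (eventually_gt_atTop 1) : ∀ᶠ c in nhdsWithin cmax (Iio cmax), 1 < I c) ?_
        rw [eventually_nhdsWithin_iff]
        filter_upwards [Ioi_mem_nhds hcm] with x hx hx'
        exact ⟨hx, hx'⟩
      obtain ⟨c₂, hc₂gt, hc₂mem⟩ := hev2.exists
      have h12 : c₁ < c₂ := by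
        by_contra h
        push_neg at h
        rcases eq_or_lt_of_le h with h' | h'
        · rw [h'] at hc₂gt; linarith
        · have := hmono hc₂mem hc₁mem h'
          linarith
      have hIcc : Icc c₁ c₂ ⊆ Ioo 0 cmax := fun x hx =>
        ⟨lt_of_lt_of_le hc₁mem.1 hx.1, lt_of_le_of_lt hx.2 hc₂mem.2⟩
      have := intermediate_value_Icc h12.le (hcont.mono hIcc)
      obtain ⟨c, hcmem, hceq⟩ := this ⟨hc₁lt.le, hc₂gt.le⟩
      exact ⟨c, hIcc hcmem, hceq⟩
  refine ⟨hmono, h2, h3, hiff, ?_⟩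
  intro c₁ h₁ c₂ h₂ he₁ he₂
  exact hmono.injOn h₁ h₂ (by rw [he₁, he₂])
end
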